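/- arXiv:1908.03827 — 5 statements merged into one kernel-verified Lean document; each statement's English description precedes it below -/
import Mathlib

section
/- Let μ_A be a probability distribution on 𝔹_T^N (possibly depending smoothly on δ near δ = 0). Then (d/dδ)|_{δ=0} E_{μ_A}[ρ_A] = (d/dδ)|_{δ=0} E_{μ_A}[ξ̂] + Σ_{i=1}^N π_i Σ_{j=1}^N Σ_{I ⊆ {1,…,N}, |I| ≤ D_{ji}} c^{ji}_I (η^{μ_A}_{{i}∪I} − η^{μ_A}_{{j}∪I}), where the η^{μ_A}_I are the unique solution of η^{μ_A}_I = E°_{μ_A}[ξ̂ − ξ_I] + Σ_{(R,α)} p°_{(R,α)} η^{μ_A}_{α̃(I)} for 1 ≤ |I| ≤ D+1 together with Σ_i π_i η^{μ_A}_{{i}} = 0. -/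
open Finset Filter Asymptotics Topology

namespace Evo

/-- A population state: each of the `N` individuals has type `A` (`true`) or `B` (`false`). -/
abbrev St (N : ℕ) := Fin N → Bool

/-- A replacement event `(R, α)`: the set `R` of replaced individuals together with a
parentage map (only the values on `R` are relevant). -/
abbrev Event (N : ℕ) := Finset (Fin N) × (Fin N → Fin N)

/-- The extended parentage map `α̃`, equal to `α` on `R` and the identity off `R`. -/
def extMap {N : ℕ} (e : Event N) (i : Fin N) : Fin N := if i ∈ e.1 then e.2 i else i

/-- The state update induced by a replacement event: `x ↦ x_α̃`. -/
def upd {N : ℕ} (e : Event N) (x : St N) : St N := fun i => x (extMap e i)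

/-- Boolean values as reals. -/
def bv (b : Bool) : ℝ := if b then 1 else 0

/-- The all-`A` state. -/
def stA (N : ℕ) : St N := fun _ => true

/-- The all-`B` state. -/
def stB (N : ℕ) : St N := fun _ => false

/-- Transient (non-monoallelic) states, i.e. members of `𝔹_T^N`. -/
def Transient {N : ℕ} (x : St N) : Prop := x ≠ stA N ∧ x ≠ stB N

/-- A replacement rule: for each state, a probability distribution over replacement events. -/
def IsRule {N : ℕ} (p : St N → Event N → ℝ) : Prop :=
  (∀ x e, 0 ≤ p x e) ∧ ∀ x, ∑ e : Event N, p x e = 1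

/-- A state-independent distribution over replacement events (a neutral replacement rule). -/
def IsDist {N : ℕ} (p0 : Event N → ℝ) : Prop :=
  (∀ e, 0 ≤ p0 e) ∧ ∑ e : Event N, p0 e = 1

/-- Transition matrix of the Markov chain induced by a replacement rule. -/
def tmat {N : ℕ} (p : St N → Event N → ℝ) : Matrix (St N) (St N) ℝ :=
  Matrix.of fun x y => ∑ e : Event N, if upd e x = y then p x e else 0

/-- The Fixation Axiom. -/
def FixAxiom {N : ℕ} (p : St N → Event N → ℝ) : Prop :=
  ∃ (i : Fin N) (m : ℕ) (ev : Fin m → Event N), 1 ≤ m ∧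
    (∀ k x, 0 < p x (ev k)) ∧ (∃ k, i ∈ (ev k).1) ∧
    (∀ j, (List.ofFn fun k => extMap (ev k)).foldr (· ∘ ·) id j = i)

/-- The sojourn time `t_ξ(x)`: expected number of visits to `x` prior to absorption,
starting from `ξ` (expressed as `Σ_t (P^t)(ξ, x)`). -/
noncomputable def sojourn {N : ℕ} (p : St N → Event N → ℝ) (ξ x : St N) : ℝ :=
  ∑' t : ℕ, (tmat p ^ t) ξ x

/-- The operator `⟨φ⟩_ξ = Σ_{t=0}^∞ E[φ(x^t) | x⁰ = ξ]` for the chain with rule `p`. -/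
noncomputable def sgen {N : ℕ} (p : St N → Event N → ℝ) (ξ : St N) (φ : St N → ℝ) : ℝ :=
  ∑' t : ℕ, ∑ x : St N, (tmat p ^ t) ξ x * φ x

/-- The marginal probability `e_ij` that `i` transmits its offspring to `j`,
for a distribution `q` over replacement events. -/
def emarg {N : ℕ} (q : Event N → ℝ) (i j : Fin N) : ℝ :=
  ∑ e : Event N, if j ∈ e.1 ∧ e.2 j = i then q e else 0

/-- `π` is the vector of reproductive values for the neutral rule `p°`:
`Σ_j e°_ij π_j = Σ_j e°_ji π_i` for all `i`, and `Σ_i π_i = 1`. -/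
def IsRV {N : ℕ} (p0 : Event N → ℝ) (π : Fin N → ℝ) : Prop :=
  (∀ i, ∑ j, emarg p0 i j * π j = ∑ j, emarg p0 j i * π i) ∧ (∑ i, π i = 1)

/-- The reproductive-value-weighted frequency `x̂ = Σ_i π_i x_i`. -/
def hatx {N : ℕ} (π : Fin N → ℝ) (x : St N) : ℝ := ∑ i, π i * bv (x i)

/-- The multilinear monomial `x_I = Π_{i ∈ I} x_i`. -/
def prodI {N : ℕ} (x : St N) (I : Finset (Fin N)) : ℝ := ∏ i ∈ I, bv (x i)

/-- The linear system defining the sojourn quantities `η_I`: for every nonempty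
`I ⊆ {1,…,N}` with `|I| ≤ D + 1`, `η_I = E(I) + Σ_{(R,α)} p°_{(R,α)} η_{α̃(I)}`,
together with the normalization `Σ_i π_i η_{{i}} = 0`. -/
def EtaSystem {N : ℕ} (p0 : Event N → ℝ) (π : Fin N → ℝ) (E : Finset (Fin N) → ℝ)
    (D : ℕ) (η : Finset (Fin N) → ℝ) : Prop :=
  (∀ I : Finset (Fin N), 1 ≤ I.card → I.card ≤ D + 1 →
    η I = E I + ∑ e : Event N, p0 e * η (I.image (extMap e))) ∧
  (∑ i, π i * η {i} = 0)

/-- `D_ij`: the degree of the multilinear representation with coefficients `c^{ij}_I`,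
i.e. the largest `|I|` with `c^{ij}_I ≠ 0` (and `0` if all coefficients vanish). -/
noncomputable def Dij {N : ℕ} (c : Fin N → Fin N → Finset (Fin N) → ℝ) (i j : Fin N) : ℕ :=
  ((Finset.univ : Finset (Finset (Fin N))).filter fun I => c i j I ≠ 0).sup Finset.card

/-- `D`: the degree of the process under weak selection, `D = max_{i,j} D_ij`. -/
noncomputable def Dmax {N : ℕ} (c : Fin N → Fin N → Finset (Fin N) → ℝ) : ℕ :=
  (Finset.univ : Finset (Fin N × Fin N)).sup fun ij => Dij c ij.1 ij.2

section Part1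
variable {N : ℕ}

instance : DecidablePred (Transient (N := N)) := fun x =>
  inferInstanceAs (Decidable (x ≠ stA N ∧ x ≠ stB N))

/-- The subtype of transient states. -/
abbrev τt (N : ℕ) := {x : St N // Transient x}

lemma bv_nonneg (b : Bool) : 0 ≤ bv b := by
  unfold bv; split <;> norm_num

lemma bv_cases (b : Bool) : bv b = 0 ∨ bv b = 1 := by
  unfold bv; split <;> simp

lemma bv_mul_prodI (x : St N) (j : Fin N) (I : Finset (Fin N)) :
    bv (x j) * prodI x I = prodI x (insert j I) := by
  by_cases h : j ∈ I
  · rw [Finset.insert_eq_self.2 h]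
    rcases bv_cases (x j) with h0 | h1
    · unfold prodI
      rw [h0, zero_mul, eq_comm]
      exact Finset.prod_eq_zero h h0
    · rw [h1, one_mul]
  · unfold prodI
    rw [Finset.prod_insert h]

lemma prodI_comp (x : St N) (f : Fin N → Fin N) (I : Finset (Fin N)) :
    ∏ i ∈ I, bv (x (f i)) = prodI x (I.image f) := by
  by_cases h : ∀ j ∈ I.image f, x j = true
  · have h1 : ∏ i ∈ I, bv (x (f i)) = 1 := by
      apply Finset.prod_eq_one
      intro i hi
      have : x (f i) = true := h _ (Finset.mem_image_of_mem f hi)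
      simp [bv, this]
    have h2 : prodI x (I.image f) = 1 := by
      apply Finset.prod_eq_one
      intro j hj
      simp [bv, h j hj]
    rw [h1, h2]
  · push_neg at h
    obtain ⟨j, hj, hxj⟩ := h
    obtain ⟨i, hi, rfl⟩ := Finset.mem_image.1 hj
    have hbv : bv (x (f i)) = 0 := by simp [bv, hxj]
    have h1 : ∏ i ∈ I, bv (x (f i)) = 0 := Finset.prod_eq_zero hi hbv
    have h2 : prodI x (I.image f) = 0 := Finset.prod_eq_zero hj hbv
    rw [h1, h2]

lemma prodI_upd (e : Event N) (x : St N) (I : Finset (Fin N)) :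
    prodI (upd e x) I = prodI x (I.image (extMap e)) := prodI_comp x (extMap e) I

lemma prodI_stA (I : Finset (Fin N)) : prodI (stA N) I = 1 :=
  Finset.prod_eq_one fun _ _ => by simp [stA, bv]

lemma prodI_stB {I : Finset (Fin N)} (hI : I.Nonempty) : prodI (stB N) I = 0 := by
  obtain ⟨i, hi⟩ := hI
  exact Finset.prod_eq_zero hi (by simp [stB, bv])

lemma prodI_singleton (x : St N) (i : Fin N) : prodI x {i} = bv (x i) :=
  Finset.prod_singleton ..

lemma hatx_stA {π : Fin N → ℝ} (hπ : ∑ i, π i = 1) : hatx π (stA N) = 1 := by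
  unfold hatx; simp [stA, bv, hπ]

lemma hatx_stB (π : Fin N → ℝ) : hatx π (stB N) = 0 := by
  unfold hatx; simp [stB, bv]

lemma upd_stA (e : Event N) : upd e (stA N) = stA N := rfl

lemma upd_stB (e : Event N) : upd e (stB N) = stB N := rfl

lemma tmat_mulVec_apply (q : St N → Event N → ℝ) (f : St N → ℝ) (x : St N) :
    ∑ y : St N, tmat q x y * f y = ∑ e : Event N, q x e * f (upd e x) := by
  unfold tmat
  simp only [Matrix.of_apply, Finset.sum_mul, ite_mul, zero_mul]
  rw [Finset.sum_comm]
  congr 1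
  ext e
  rw [Finset.sum_ite_eq Finset.univ (upd e x) (fun y => q x e * f y)]
  simp

lemma tmat_apply_stA (q : St N → Event N → ℝ) (hq : ∀ x, ∑ e : Event N, q x e = 1)
    (y : St N) : tmat q (stA N) y = if y = stA N then 1 else 0 := by
  unfold tmat
  simp only [Matrix.of_apply, upd_stA]
  by_cases h : y = stA N
  · simp [h, hq]
  · simp only [h, if_false]
    apply Finset.sum_eq_zero
    intro e _
    simp [fun _ => (Ne.symm h : ¬ stA N = y), Ne.symm h]

lemma tmat_apply_stB (q : St N → Event N → ℝ) (hq : ∀ x, ∑ e : Event N, q x e = 1)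
    (y : St N) : tmat q (stB N) y = if y = stB N then 1 else 0 := by
  unfold tmat
  simp only [Matrix.of_apply, upd_stB]
  by_cases h : y = stB N
  · simp [h, hq]
  · simp only [h, if_false]
    apply Finset.sum_eq_zero
    intro e _
    simp [fun _ => (Ne.symm h : ¬ stB N = y), Ne.symm h]

lemma tmat_nonneg {q : St N → Event N → ℝ} (hq : ∀ x e, 0 ≤ q x e) (x y : St N) :
    0 ≤ tmat q x y := by
  unfold tmat
  simp only [Matrix.of_apply]
  apply Finset.sum_nonneg
  intro e _
  split
  · exact hq x e
  · exact le_refl 0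

lemma tmat_row_sum {q : St N → Event N → ℝ} (hq : ∀ x, ∑ e : Event N, q x e = 1) (x : St N) :
    ∑ y : St N, tmat q x y = 1 := by
  have := tmat_mulVec_apply q (fun _ => 1) x
  simpa [hq] using this

lemma tmat_ge_single {q : St N → Event N → ℝ} (hq : ∀ x e, 0 ≤ q x e) (x : St N)
    (e : Event N) : q x e ≤ tmat q x (upd e x) := by
  unfold tmat
  simp only [Matrix.of_apply]
  have : q x e = if upd e x = upd e x then q x e else 0 := by simp
  rw [this]
  apply Finset.single_le_sum (f := fun e' => if upd e' x = upd e x then q x e' else 0)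
  · intro e' _
    split
    · exact hq x e'
    · exact le_refl 0
  · exact Finset.mem_univ e

lemma sum_split (hAB : stA N ≠ stB N) (f : St N → ℝ) :
    ∑ y : St N, f y = f (stA N) + f (stB N) + ∑ y : τt N, f y.val := by
  have h1 : ∑ y : τt N, f y.val
      = ∑ y ∈ Finset.univ.filter (Transient (N := N)), f y :=
    (Finset.sum_subtype (Finset.univ.filter (Transient (N := N)))
      (by intro x; simp) f).symm
  have h2 : ∑ y ∈ Finset.univ.filter (fun y => ¬ Transient (N := N) y), f y
      = f (stA N) + f (stB N) := by
    have : Finset.univ.filter (fun y => ¬ Transient (N := N) y) = {stA N, stB N} := by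
      ext y
      simp [Transient, not_and_or, or_comm, or_congr, em]
      tauto
    rw [this, Finset.sum_pair hAB]
  rw [← Finset.sum_filter_add_sum_filter_not Finset.univ (Transient (N := N)) f, h1, h2]
  ring

end Part1
section Part2
variable {N : ℕ} {α : Type*} [Fintype α] [DecidableEq α]

lemma pow_entry_nonneg {M : Matrix α α ℝ} (h : ∀ a b, 0 ≤ M a b) (t : ℕ) :
    ∀ a b, 0 ≤ (M ^ t) a b := by
  induction t with
  | zero => intro a b; simp [Matrix.one_apply]; split <;> norm_num
  | succ t ih =>
    intro a b
    rw [pow_succ, Matrix.mul_apply]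
    exact Finset.sum_nonneg fun c _ => mul_nonneg (ih a c) (h c b)

lemma pow_row_sum {M : Matrix α α ℝ} (h : ∀ a, ∑ b, M a b = 1) (t : ℕ) :
    ∀ a, ∑ b, (M ^ t) a b = 1 := by
  induction t with
  | zero => intro a; simp [Matrix.one_apply]
  | succ t ih =>
    intro a
    simp only [pow_succ, Matrix.mul_apply]
    rw [Finset.sum_comm]
    calc ∑ c, ∑ b, (M ^ t) a c * M c b = ∑ c, (M ^ t) a c * ∑ b, M c b := by
          simp [Finset.mul_sum]
      _ = 1 := by simp [h, ih a]
  
lemma pow_mulVec_self {M : Matrix α α ℝ} {v : α → ℝ} (h : M.mulVec v = v) (t : ℕ) :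
    (M ^ t).mulVec v = v := by
  induction t with
  | zero => simp [Matrix.one_mulVec]
  | succ t ih => rw [pow_succ, ← Matrix.mulVec_mulVec, h, ih]

/-- Path lower bound for powers of an entrywise-nonnegative matrix. -/
lemma path_bound (M : Matrix α α ℝ) (hnn : ∀ a b, 0 ≤ M a b)
    (p0 : Event N → ℝ) (hp0 : ∀ e, 0 ≤ p0 e)
    (step : α → Event N → α) (hstep : ∀ a e, p0 e ≤ M a (step a e)) :
    ∀ (l : List (Event N)) (a : α), (l.map p0).prod ≤ (M ^ l.length) a (l.foldl step a) := by
  intro l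
  induction l with
  | nil => intro a; simp [Matrix.one_apply]
  | cons e t ih =>
    intro a
    simp only [List.map_cons, List.prod_cons, List.length_cons, List.foldl_cons]
    rw [pow_succ', Matrix.mul_apply]
    have key : M a (step a e) * (M ^ t.length) (step a e) (t.foldl step (step a e))
        ≤ ∑ c, M a c * (M ^ t.length) c (t.foldl step (step a e)) := by
      apply Finset.single_le_sum
        (f := fun c => M a c * (M ^ t.length) c (t.foldl step (step a e)))
      · intro c _
        exact mul_nonneg (hnn a c) (pow_entry_nonneg hnn _ _ _)
      · exact Finset.mem_univ _
    have hprod : (0:ℝ) ≤ (t.map p0).prod := List.prod_nonneg (by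
      intro x hx
      obtain ⟨e', -, rfl⟩ := List.mem_map.1 hx
      exact hp0 e')
    exact le_trans (mul_le_mul (hstep a e) (ih (step a e)) hprod (hnn _ _)) key

lemma harmonic_nonpos (M : Matrix α α ℝ)
    (hnn : ∀ a b, 0 ≤ M a b) (hrow : ∀ a, ∑ b, M a b = 1)
    (v : α → ℝ) (hv : M.mulVec v = v) (Z : Finset α) (hZ : ∀ z ∈ Z, v z = 0)
    (m : ℕ) (β : ℝ) (hβ : 0 < β) (hm : ∀ a, β ≤ ∑ z ∈ Z, (M ^ m) a z) :
    ∀ a, v a ≤ 0 := by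
  intro a
  have hne : Nonempty α := ⟨a⟩
  obtain ⟨a0, -, ha0⟩ := Finset.exists_max_image Finset.univ v Finset.univ_nonempty
  have hKmax : ∀ b, v b ≤ v a0 := fun b => ha0 b (Finset.mem_univ b)
  set K := v a0 with hK
  have hZne : ∃ z, z ∈ Z := by
    by_contra h
    push_neg at h
    have hZe : Z = ∅ := Finset.eq_empty_of_forall_notMem h
    have h2 := hm a
    rw [hZe, Finset.sum_empty] at h2
    linarith
  obtain ⟨z0, hz0⟩ := hZne
  have hK0 : 0 ≤ K := by
    have h4 := hKmax z0
    rw [hZ z0 hz0] at h4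
    exact h4
  have hMm_nn := pow_entry_nonneg hnn m
  have hMm_row := pow_row_sum hrow m
  have hvm := pow_mulVec_self hv m
  set w : α → ℝ := fun b => (M ^ m) a0 b with hw
  set S : ℝ := ∑ z ∈ Z, w z with hS
  have hfZ : Finset.univ.filter (fun b : α => b ∈ Z) = Z := by
    ext b; simp
  have h1 : K = ∑ b, w b * v b := by
    conv_lhs => rw [hK, ← hvm]
    rfl
  have h2 : ∑ b, w b * v b ≤ ∑ b, w b * (if b ∈ Z then 0 else K) := by
    apply Finset.sum_le_sum
    intro b _
    by_cases hb : b ∈ Z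
    · simp [hb, hZ b hb]
    · simp only [hb, if_false]
      exact mul_le_mul_of_nonneg_left (hKmax b) (hMm_nn a0 b)
  have h3 : ∑ b, w b * (if b ∈ Z then 0 else K) = (1 - S) * K := by
    rw [← Finset.sum_filter_add_sum_filter_not Finset.univ (fun b => b ∈ Z)
      (fun b => w b * (if b ∈ Z then 0 else K))]
    have e1 : ∑ b ∈ Finset.univ.filter (fun b : α => b ∈ Z),
        w b * (if b ∈ Z then 0 else K) = 0 := by
      apply Finset.sum_eq_zero
      intro b hb
      simp only [Finset.mem_filter] at hb
      simp [hb.2]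
    have e2 : ∑ b ∈ Finset.univ.filter (fun b : α => ¬ b ∈ Z),
        w b * (if b ∈ Z then 0 else K)
        = (∑ b ∈ Finset.univ.filter (fun b : α => ¬ b ∈ Z), w b) * K := by
      rw [Finset.sum_mul]
      apply Finset.sum_congr rfl
      intro b hb
      simp only [Finset.mem_filter] at hb
      simp [hb.2]
    have e3 : (∑ b ∈ Finset.univ.filter (fun b : α => ¬ b ∈ Z), w b) = 1 - S := by
      have := Finset.sum_filter_add_sum_filter_not Finset.univ (fun b : α => b ∈ Z) w
      rw [hfZ] at this
      have hr := hMm_row a0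
      rw [hS]
      linarith [this, hr]
    rw [e1, e2, e3, zero_add]
  have hSβ : β ≤ S := hm a0
  have step : K ≤ (1 - β) * K := by
    have : (1 - S) * K ≤ (1 - β) * K :=
      mul_le_mul_of_nonneg_right (by linarith) hK0
    calc K = ∑ b, w b * v b := h1
      _ ≤ ∑ b, w b * (if b ∈ Z then 0 else K) := h2
      _ = (1 - S) * K := h3
      _ ≤ (1 - β) * K := this
  have hKle : K ≤ 0 := by nlinarith
  exact le_trans (hKmax a) hKle

lemma harmonic_eq_zero (M : Matrix α α ℝ)
    (hnn : ∀ a b, 0 ≤ M a b) (hrow : ∀ a, ∑ b, M a b = 1)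
    (v : α → ℝ) (hv : M.mulVec v = v) (Z : Finset α) (hZ : ∀ z ∈ Z, v z = 0)
    (m : ℕ) (β : ℝ) (hβ : 0 < β) (hm : ∀ a, β ≤ ∑ z ∈ Z, (M ^ m) a z) :
    ∀ a, v a = 0 := by
  intro a
  have h1 := harmonic_nonpos M hnn hrow v hv Z hZ m β hβ hm a
  have hvneg : M.mulVec (-v) = -v := by rw [Matrix.mulVec_neg, hv]
  have h2 := harmonic_nonpos M hnn hrow (-v) hvneg Z
    (fun z hz => by simp [hZ z hz]) m β hβ hm a
  simp only [Pi.neg_apply, neg_nonpos] at h2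
  linarith

end Part2
section Part3
variable {N : ℕ}

/-- The transient-to-transient block of the transition matrix. -/
def Qmat (q : St N → Event N → ℝ) : Matrix (τt N) (τt N) ℝ :=
  Matrix.of fun x y : τt N => tmat q x.val y.val

lemma fix_data {p0 : Event N → ℝ} (hfb : FixAxiom (fun _ : St N => p0)) :
    ∃ (i0 : Fin N) (l : List (Event N)), (∀ e ∈ l, 0 < p0 e) ∧
      (∀ j, ((l.map extMap).foldr (· ∘ ·) id) j = i0) := by
  obtain ⟨i0, m, ev, -, hpos, -, hcomp⟩ := hfb
  refine ⟨i0, List.ofFn ev, ?_, ?_⟩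
  · intro e he
    rw [List.mem_ofFn] at he
    obtain ⟨k, rfl⟩ := he
    exact hpos k (stA N)
  · intro j
    have : (List.ofFn ev).map extMap = List.ofFn fun k => extMap (ev k) :=
      List.map_ofFn
    rw [this]
    exact hcomp j

lemma foldr_comp_init (l : List (Fin N → Fin N)) (g : Fin N → Fin N) :
    l.foldr (· ∘ ·) g = (l.foldr (· ∘ ·) id) ∘ g := by
  induction l with
  | nil => rfl
  | cons f t ih => simp only [List.foldr_cons, ih]; rfl

lemma foldl_upd (l : List (Event N)) (x : St N) :
    l.foldl (fun y e => upd e y) x = fun j => x (((l.map extMap).foldr (· ∘ ·) id) j) := by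
  induction l generalizing x with
  | nil => rfl
  | cons e t ih =>
    simp only [List.foldl_cons, List.map_cons, List.foldr_cons]
    rw [ih (upd e x)]
    rfl

lemma foldl_image (l : List (Event N)) (I : Finset (Fin N)) :
    l.foldl (fun J e => J.image (extMap e)) I
      = I.image ((l.reverse.map extMap).foldr (· ∘ ·) id) := by
  induction l generalizing I with
  | nil => simp
  | cons e t ih =>
    simp only [List.foldl_cons, List.reverse_cons, List.map_append, List.foldr_append,
      List.map_cons, List.map_nil, List.foldr_cons, List.foldr_nil]
    rw [ih (I.image (extMap e)), Finset.image_image]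
    conv_rhs => rw [foldr_comp_init]
    rfl

/-- The key `Cramer`-style resolution lemma. -/
lemma solve_by_adjugate {α : Type*} [Fintype α] [DecidableEq α]
    {A : Matrix α α ℝ} (hdet : A.det ≠ 0) {v b : α → ℝ} (hAv : A.mulVec v = b) :
    v = fun x => (A.det)⁻¹ * (A.adjugate.mulVec b) x := by
  have h1 : A.adjugate.mulVec b = A.det • v := by
    rw [← hAv, Matrix.mulVec_mulVec, Matrix.adjugate_mul, Matrix.smul_mulVec,
      Matrix.one_mulVec]
  funext x
  rw [h1]
  simp only [Pi.smul_apply, smul_eq_mul]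
  field_simp

lemma det_ne_zero_of_fix {p0 : Event N → ℝ} (h0 : IsDist p0)
    (hfb : FixAxiom (fun _ : St N => p0)) (hAB : stA N ≠ stB N) :
    ((1 : Matrix (τt N) (τt N) ℝ) - Qmat (fun _ => p0)).det ≠ 0 := by
  set P : Matrix (St N) (St N) ℝ := tmat (fun _ => p0) with hP
  have hnn : ∀ x y, 0 ≤ P x y := tmat_nonneg (fun _ e => h0.1 e)
  have hrow : ∀ x, ∑ y, P x y = 1 := tmat_row_sum (fun _ => h0.2)
  intro hdet
  rw [← Matrix.exists_mulVec_eq_zero_iff] at hdet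
  obtain ⟨v, hv0, hv⟩ := hdet
  -- v is Q-harmonic
  have hvQ : (Qmat (fun _ => p0)).mulVec v = v := by
    have := hv
    rw [Matrix.sub_mulVec, Matrix.one_mulVec] at this
    have := sub_eq_zero.1 this
    exact this.symm
  -- extend by zero
  classical
  set vb : St N → ℝ := fun x => if h : Transient x then v ⟨x, h⟩ else 0 with hvb
  have hvbA : vb (stA N) = 0 := by
    rw [hvb]; simp [Transient]
  have hvbB : vb (stB N) = 0 := by
    rw [hvb]; simp [Transient]
  have hvbt : ∀ x : τt N, vb x.val = v x := by
    intro x; rw [hvb]; simp [x.2]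
  have hharm : P.mulVec vb = vb := by
    funext x
    by_cases hx : Transient x
    · have : P.mulVec vb x = ∑ y : St N, P x y * vb y := rfl
      rw [this, sum_split hAB (fun y => P x y * vb y), hvbA, hvbB]
      have h2 : ∑ y : τt N, P x y.val * vb y.val
          = (Qmat (fun _ => p0)).mulVec v ⟨x, hx⟩ := by
        apply Finset.sum_congr rfl
        intro y _
        rw [hvbt y]
        rfl
      rw [h2, hvQ]
      simp [hvbt ⟨x, hx⟩]
    · have hxAB : x = stA N ∨ x = stB N := by
        by_contra hcon
        push_neg at hcon
        exact hx ⟨hcon.1, hcon.2⟩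
      have hval : vb x = 0 := by
        rcases hxAB with rfl | rfl
        · exact hvbA
        · exact hvbB
      have : P.mulVec vb x = vb x := by
        rcases hxAB with rfl | rfl
        · have : P.mulVec vb (stA N) = ∑ y : St N, P (stA N) y * vb y := rfl
          rw [this]
          calc ∑ y : St N, P (stA N) y * vb y
              = ∑ y : St N, (if y = stA N then 1 else 0) * vb y := by
                apply Finset.sum_congr rfl
                intro y _
                rw [hP, tmat_apply_stA _ (fun _ => h0.2)]
            _ = vb (stA N) := by simp
        · have : P.mulVec vb (stB N) = ∑ y : St N, P (stB N) y * vb y := rfl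
          rw [this]
          calc ∑ y : St N, P (stB N) y * vb y
              = ∑ y : St N, (if y = stB N then 1 else 0) * vb y := by
                apply Finset.sum_congr rfl
                intro y _
                rw [hP, tmat_apply_stB _ (fun _ => h0.2)]
            _ = vb (stB N) := by simp
      exact this
  -- the fixation path
  obtain ⟨i0, l, hlpos, hlcomp⟩ := fix_data hfb
  set β : ℝ := (l.map p0).prod with hβdef
  have hβ : 0 < β := by
    rw [hβdef]
    apply List.prod_pos
    intro a ha
    obtain ⟨e, he, rfl⟩ := List.mem_map.1 ha
    exact hlpos e he
  have hstep : ∀ (y : St N) (e : Event N), p0 e ≤ P y (upd e y) := by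
    intro y e
    exact tmat_ge_single (fun _ e' => h0.1 e') y e
  have hbound : ∀ x : St N,
      β ≤ ∑ z ∈ ({stA N, stB N} : Finset (St N)), (P ^ l.length) x z := by
    intro x
    have hpath := path_bound P hnn p0 h0.1 (fun y e => upd e y) hstep l x
    have hfin : l.foldl (fun y e => upd e y) x = (if x i0 = true then stA N else stB N) := by
      rw [foldl_upd]
      funext j
      rw [hlcomp j]
      cases h : x i0 <;> simp [h, stA, stB]
    rw [hfin] at hpath
    have hmem : (if x i0 = true then stA N else stB N) ∈ ({stA N, stB N} : Finset (St N)) := by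
      by_cases h : x i0 = true <;> simp [h]
    have hsingle : (P ^ l.length) x (if x i0 = true then stA N else stB N)
        ≤ ∑ z ∈ ({stA N, stB N} : Finset (St N)), (P ^ l.length) x z :=
      Finset.single_le_sum (fun z _ => pow_entry_nonneg hnn l.length x z) hmem
    exact le_trans hpath hsingle
  have hZ : ∀ z ∈ ({stA N, stB N} : Finset (St N)), vb z = 0 := by
    intro z hz
    rcases Finset.mem_insert.1 hz with rfl | hz2
    · exact hvbA
    · rw [Finset.mem_singleton.1 hz2]
      exact hvbB
  have hzero := harmonic_eq_zero P hnn hrow vb hharm ({stA N, stB N} : Finset (St N)) hZ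
    l.length β hβ hbound
  apply hv0
  funext x
  have := hzero x.val
  rw [← hvbt x, this]
  rfl

end Part3
section Part4
variable {N : ℕ}

lemma sum_fiber_emarg (p0 : Event N → ℝ) (i : Fin N) (F : Fin N → ℝ) :
    ∑ e : Event N, (if i ∈ e.1 then p0 e * F (e.2 i) else 0)
      = ∑ j : Fin N, emarg p0 j i * F j := by
  have h1 : ∀ e : Event N, (if i ∈ e.1 then p0 e * F (e.2 i) else 0)
      = ∑ j : Fin N, (if i ∈ e.1 ∧ e.2 i = j then p0 e * F j else 0) := by
    intro e
    by_cases h : i ∈ e.1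
    · simp only [h, true_and, if_true]
      rw [Finset.sum_ite_eq Finset.univ (e.2 i) (fun j => p0 e * F j)]
      simp
    · simp [h]
  calc ∑ e : Event N, (if i ∈ e.1 then p0 e * F (e.2 i) else 0)
      = ∑ e : Event N, ∑ j : Fin N, (if i ∈ e.1 ∧ e.2 i = j then p0 e * F j else 0) :=
        Finset.sum_congr rfl fun e _ => h1 e
    _ = ∑ j : Fin N, ∑ e : Event N, (if i ∈ e.1 ∧ e.2 i = j then p0 e * F j else 0) :=
        Finset.sum_comm
    _ = ∑ j : Fin N, emarg p0 j i * F j := by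
        apply Finset.sum_congr rfl
        intro j _
        unfold emarg
        rw [Finset.sum_mul]
        apply Finset.sum_congr rfl
        intro e _
        split <;> simp

lemma single_site_step (p0 : Event N → ℝ) (h0 : IsDist p0) (x : St N) (i : Fin N) :
    ∑ e : Event N, p0 e * bv (x (extMap e i))
      = bv (x i) + ∑ j : Fin N, emarg p0 j i * (bv (x j) - bv (x i)) := by
  have h1 : ∀ e : Event N, p0 e * bv (x (extMap e i))
      = p0 e * bv (x i) + (if i ∈ e.1 then p0 e * (bv (x (e.2 i)) - bv (x i)) else 0) := by
    intro e
    by_cases h : i ∈ e.1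
    · simp only [extMap, h, if_true]
      ring
    · simp only [extMap, h, if_false]
      ring
  rw [Finset.sum_congr rfl fun e _ => h1 e, Finset.sum_add_distrib]
  rw [← Finset.sum_mul, h0.2, one_mul]
  congr 1
  exact sum_fiber_emarg p0 i (fun j => bv (x j) - bv (x i))

lemma hatx_step {p0 : Event N → ℝ} {π : Fin N → ℝ} (h0 : IsDist p0) (hπ : IsRV p0 π)
    (x : St N) : ∑ e : Event N, p0 e * hatx π (upd e x) = hatx π x := by
  have h1 : ∑ e : Event N, p0 e * hatx π (upd e x)
      = ∑ i, π i * ∑ e : Event N, p0 e * bv (x (extMap e i)) := by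
    unfold hatx upd
    simp only [Finset.mul_sum]
    rw [Finset.sum_comm]
    apply Finset.sum_congr rfl
    intro i _
    apply Finset.sum_congr rfl
    intro e _
    ring
  rw [h1]
  have h2 : ∑ i, π i * ∑ e : Event N, p0 e * bv (x (extMap e i))
      = hatx π x + ∑ i, π i * ∑ j, emarg p0 j i * (bv (x j) - bv (x i)) := by
    unfold hatx
    rw [← Finset.sum_add_distrib]
    apply Finset.sum_congr rfl
    intro i _
    rw [single_site_step p0 h0 x i]
    ring
  rw [h2]
  have h3 : ∑ i, π i * ∑ j, emarg p0 j i * (bv (x j) - bv (x i))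
      = (∑ i, ∑ j, emarg p0 j i * π i * bv (x j))
        - (∑ i, ∑ j, emarg p0 j i * π i * bv (x i)) := by
    rw [← Finset.sum_sub_distrib]
    apply Finset.sum_congr rfl
    intro i _
    rw [Finset.mul_sum, ← Finset.sum_sub_distrib]
    apply Finset.sum_congr rfl
    intro j _
    ring
  have h4 : ∑ i, ∑ j, emarg p0 j i * π i * bv (x j)
      = ∑ i, ∑ j, emarg p0 j i * π i * bv (x i) := by
    rw [Finset.sum_comm]
    apply Finset.sum_congr rfl
    intro j _
    have h5 : ∑ i, emarg p0 j i * π i * bv (x j)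
        = (∑ i, emarg p0 j i * π i) * bv (x j) := by rw [Finset.sum_mul]
    have h6 : ∑ i, emarg p0 i j * π j * bv (x j)
        = (∑ i, emarg p0 i j * π j) * bv (x j) := by rw [Finset.sum_mul]
    rw [h5, h6]
    congr 1
    exact hπ.1 j
  rw [h3, h4]
  ring

/-- `x̂` solves the boundary system for the neutral process. -/
lemma Amat_mulVec_hatx {p0 : Event N → ℝ} {π : Fin N → ℝ} (h0 : IsDist p0) (hπ : IsRV p0 π)
    (hAB : stA N ≠ stB N) :
    ((1 : Matrix (τt N) (τt N) ℝ) - Qmat (fun _ => p0)).mulVec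
        (fun y : τt N => hatx π y.val)
      = fun x : τt N => tmat (fun _ => p0) x.val (stA N) := by
  funext x
  rw [Matrix.sub_mulVec, Matrix.one_mulVec]
  have hsplit := sum_split hAB (fun y => tmat (fun _ => p0) x.val y * hatx π y)
  have hfull : ∑ y : St N, tmat (fun _ => p0) x.val y * hatx π y = hatx π x.val := by
    rw [tmat_mulVec_apply]
    exact hatx_step h0 hπ x.val
  have hQ : (Qmat (fun _ => p0)).mulVec (fun y : τt N => hatx π y.val) x
      = ∑ y : τt N, tmat (fun _ => p0) x.val y.val * hatx π y.val := rfl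
  have hτ : ∑ y : τt N, tmat (fun _ => p0) x.val y.val * hatx π y.val
      = hatx π x.val - tmat (fun _ => p0) x.val (stA N) := by
    rw [hfull, hatx_stA hπ.2, hatx_stB] at hsplit
    linarith
  simp only [Pi.sub_apply, hQ, hτ]
  ring
end Part4
section Part5
variable {N : ℕ}

/-- The functional `Λ φ = Σ_x μ⁰(x) ((I - Q⁰)⁻¹ φ)(x)`. -/
noncomputable def lamF (p0 : Event N → ℝ) (μ0 : St N → ℝ) (φ : St N → ℝ) : ℝ :=
  ∑ x : τt N, μ0 x.val *
    (((1 : Matrix (τt N) (τt N) ℝ) - Qmat (fun _ => p0))⁻¹.mulVec (fun y : τt N => φ y.val)) x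

/-- The candidate solution `η*` of the η-system. -/
noncomputable def etaStar (p0 : Event N → ℝ) (μ0 : St N → ℝ) (π : Fin N → ℝ)
    (J : Finset (Fin N)) : ℝ := lamF p0 μ0 (fun x => hatx π x - prodI x J)

lemma mulVec_comb {α ι : Type*} [Fintype α] [DecidableEq α] [Fintype ι]
    (M : Matrix α α ℝ) (s : Finset ι) (a : ι → ℝ) (φ : ι → α → ℝ) :
    M.mulVec (fun y => ∑ z ∈ s, a z * φ z y)
      = fun x => ∑ z ∈ s, a z * M.mulVec (φ z) x := by
  funext x
  simp only [Matrix.mulVec, dotProduct, Finset.mul_sum]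
  rw [Finset.sum_comm]
  apply Finset.sum_congr rfl
  intro z _
  apply Finset.sum_congr rfl
  intro y _
  ring

lemma lamF_comb {ι : Type*} [Fintype ι] (p0 : Event N → ℝ) (μ0 : St N → ℝ)
    (s : Finset ι) (a : ι → ℝ) (φ : ι → St N → ℝ) :
    lamF p0 μ0 (fun x => ∑ z ∈ s, a z * φ z x) = ∑ z ∈ s, a z * lamF p0 μ0 (φ z) := by
  unfold lamF
  have h1 : (fun y : τt N => ∑ z ∈ s, a z * φ z y.val)
      = fun y : τt N => ∑ z ∈ s, a z * (fun w : τt N => φ z w.val) y := rfl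
  rw [h1, mulVec_comb]
  simp only [Finset.mul_sum]
  rw [Finset.sum_comm]
  apply Finset.sum_congr rfl
  intro z _
  apply Finset.sum_congr rfl
  intro x _
  ring

lemma lamF_zero (p0 : Event N → ℝ) (μ0 : St N → ℝ) :
    lamF p0 μ0 (fun _ => 0) = 0 := by
  unfold lamF
  have : (fun y : τt N => (0:ℝ)) = (0 : τt N → ℝ) := rfl
  rw [this, Matrix.mulVec_zero]
  simp

end Part5
section Part6
variable {N : ℕ}

lemma etaStar_recursion {p0 : Event N → ℝ} {π : Fin N → ℝ} (h0 : IsDist p0)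
    (hπ : IsRV p0 π) (hAB : stA N ≠ stB N)
    (hdet : ((1 : Matrix (τt N) (τt N) ℝ) - Qmat (fun _ => p0)).det ≠ 0)
    (μ0 : St N → ℝ) (hμA : μ0 (stA N) = 0) (hμB : μ0 (stB N) = 0)
    {I : Finset (Fin N)} (hI : I.Nonempty) :
    etaStar p0 μ0 π I = (∑ x : St N, μ0 x * (hatx π x - prodI x I))
      + ∑ e : Event N, p0 e * etaStar p0 μ0 π (I.image (extMap e)) := by
  classical
  set Q : Matrix (τt N) (τt N) ℝ := Qmat (fun _ => p0) with hQdef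
  set A : Matrix (τt N) (τt N) ℝ := 1 - Q with hAdef
  have hunit : IsUnit A.det := isUnit_iff_ne_zero.2 hdet
  have hinv_mul : A⁻¹ * A = 1 := Matrix.nonsing_inv_mul A hunit
  have hinv_eq : A⁻¹ = 1 + A⁻¹ * Q := by
    have hAQ : A + Q = 1 := by rw [hAdef]; exact sub_add_cancel 1 Q
    calc A⁻¹ = A⁻¹ * 1 := by rw [mul_one]
      _ = A⁻¹ * (A + Q) := by rw [hAQ]
      _ = A⁻¹ * A + A⁻¹ * Q := by rw [mul_add]
      _ = 1 + A⁻¹ * Q := by rw [hinv_mul]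
  set φI : St N → ℝ := fun x => hatx π x - prodI x I with hφI
  set φτ : τt N → ℝ := fun y => φI y.val with hφτ
  have hφA : φI (stA N) = 0 := by
    rw [hφI]; simp only []; rw [hatx_stA hπ.2, prodI_stA]; ring
  have hφB : φI (stB N) = 0 := by
    rw [hφI]; simp only []; rw [hatx_stB, prodI_stB hI]; ring
  -- key: Q.mulVec φτ
  have hQφ : Q.mulVec φτ = fun x : τt N =>
      ∑ e : Event N, p0 e * (hatx π x.val - prodI x.val (I.image (extMap e))) := by
    funext x
    have h1 : Q.mulVec φτ x = ∑ y : τt N, tmat (fun _ => p0) x.val y.val * φI y.val := rfl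
    have hsplit := sum_split hAB (fun y => tmat (fun _ => p0) x.val y * φI y)
    rw [hφA, hφB, mul_zero, mul_zero, zero_add, zero_add] at hsplit
    have h2 : ∑ y : St N, tmat (fun _ => p0) x.val y * φI y
        = ∑ e : Event N, p0 e * φI (upd e x.val) := tmat_mulVec_apply _ _ _
    have h3 : ∀ e : Event N, φI (upd e x.val)
        = hatx π (upd e x.val) - prodI x.val (I.image (extMap e)) := by
      intro e
      rw [hφI]
      simp only []
      rw [prodI_upd]
    have h4 : ∑ e : Event N, p0 e * φI (upd e x.val)
        = ∑ e : Event N, p0 e * (hatx π x.val - prodI x.val (I.image (extMap e))) := by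
      have d1 : ∑ e : Event N, p0 e * φI (upd e x.val)
          = (∑ e : Event N, p0 e * hatx π (upd e x.val))
            - ∑ e : Event N, p0 e * prodI x.val (I.image (extMap e)) := by
        rw [← Finset.sum_sub_distrib]
        apply Finset.sum_congr rfl
        intro e _
        rw [h3 e]
        ring
      have d2 : ∑ e : Event N, p0 e * (hatx π x.val - prodI x.val (I.image (extMap e)))
          = (∑ e : Event N, p0 e * hatx π x.val)
            - ∑ e : Event N, p0 e * prodI x.val (I.image (extMap e)) := by
        rw [← Finset.sum_sub_distrib]
        apply Finset.sum_congr rfl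
        intro e _
        ring
      rw [d1, d2, hatx_step h0 hπ, ← Finset.sum_mul, h0.2, one_mul]
    rw [h1, ← hsplit, h2, h4]
  -- now expand
  have hvec : A⁻¹.mulVec φτ = fun x => φτ x + (A⁻¹.mulVec (Q.mulVec φτ)) x := by
    conv_lhs => rw [hinv_eq]
    funext x
    rw [Matrix.add_mulVec, Matrix.one_mulVec, ← Matrix.mulVec_mulVec]
    rfl
  have hexpand0 : etaStar p0 μ0 π I = ∑ x : τt N, μ0 x.val * (A⁻¹.mulVec φτ) x := by
    rw [hAdef, hQdef, hφτ, hφI]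
    rfl
  have hexpand : etaStar p0 μ0 π I
      = ∑ x : τt N, μ0 x.val * (φτ x + (A⁻¹.mulVec (Q.mulVec φτ)) x) := by
    rw [hexpand0, hvec]
  have hEterm : ∑ x : τt N, μ0 x.val * φτ x = ∑ x : St N, μ0 x * (hatx π x - prodI x I) := by
    have hsplit := sum_split hAB (fun x => μ0 x * φI x)
    rw [hμA, hμB, zero_mul, zero_mul, zero_add, zero_add] at hsplit
    rw [← hsplit]
  -- second piece
  have hsecond : ∑ x : τt N, μ0 x.val * (A⁻¹.mulVec (Q.mulVec φτ)) x
      = ∑ e : Event N, p0 e * etaStar p0 μ0 π (I.image (extMap e)) := by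
    have h5 : Q.mulVec φτ = fun y : τt N => ∑ e : Event N, p0 e *
        (fun w : τt N => hatx π w.val - prodI w.val (I.image (extMap e))) y := hQφ
    rw [h5, mulVec_comb A⁻¹ Finset.univ p0
      (fun e => fun w : τt N => hatx π w.val - prodI w.val (I.image (extMap e)))]
    simp only [Finset.mul_sum]
    rw [Finset.sum_comm]
    apply Finset.sum_congr rfl
    intro e _
    unfold etaStar lamF
    rw [Finset.mul_sum]
    apply Finset.sum_congr rfl
    intro x _
    rw [← hQdef, ← hAdef]
    ring
  rw [hexpand]
  have : ∑ x : τt N, μ0 x.val * (φτ x + (A⁻¹.mulVec (Q.mulVec φτ)) x)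
      = (∑ x : τt N, μ0 x.val * φτ x)
        + ∑ x : τt N, μ0 x.val * (A⁻¹.mulVec (Q.mulVec φτ)) x := by
    rw [← Finset.sum_add_distrib]
    apply Finset.sum_congr rfl
    intro x _
    ring
  rw [this, hEterm, hsecond]

lemma etaStar_norm {p0 : Event N → ℝ} {π : Fin N → ℝ} (hπ2 : ∑ i, π i = 1)
    (μ0 : St N → ℝ) : ∑ i, π i * etaStar p0 μ0 π {i} = 0 := by
  have h1 : ∑ i, π i * etaStar p0 μ0 π {i}
      = lamF p0 μ0 (fun x => ∑ i, π i * (hatx π x - prodI x {i})) := by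
    rw [lamF_comb p0 μ0 Finset.univ π (fun i => fun x => hatx π x - prodI x {i})]
    rfl
  rw [h1]
  have h2 : (fun x => ∑ i, π i * (hatx π x - prodI x {i})) = fun _ : St N => (0:ℝ) := by
    funext x
    have : ∑ i, π i * (hatx π x - prodI x {i})
        = (∑ i, π i) * hatx π x - ∑ i, π i * bv (x i) := by
      rw [Finset.sum_mul, ← Finset.sum_sub_distrib]
      apply Finset.sum_congr rfl
      intro i _
      rw [prodI_singleton]
      ring
    rw [this, hπ2, one_mul]
    unfold hatx
    ring
  rw [h2, lamF_zero]

end Part6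
section Part7
variable {N : ℕ}

lemma eta_unique {p0 : Event N → ℝ} {π : Fin N → ℝ} (h0 : IsDist p0)
    (hfb : FixAxiom (fun _ : St N => p0)) (hπ2 : ∑ i, π i = 1)
    (D : ℕ) (E : Finset (Fin N) → ℝ) (η1 η2 : Finset (Fin N) → ℝ)
    (hr1 : ∀ I : Finset (Fin N), 1 ≤ I.card → I.card ≤ D + 1 →
      η1 I = E I + ∑ e : Event N, p0 e * η1 (I.image (extMap e)))
    (hr2 : ∀ I : Finset (Fin N), 1 ≤ I.card → I.card ≤ D + 1 →
      η2 I = E I + ∑ e : Event N, p0 e * η2 (I.image (extMap e)))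
    (hn1 : ∑ i, π i * η1 {i} = 0) (hn2 : ∑ i, π i * η2 {i} = 0) :
    ∀ I : Finset (Fin N), 1 ≤ I.card → I.card ≤ D + 1 → η1 I = η2 I := by
  classical
  obtain ⟨i0, l, hlpos, hlcomp⟩ := fix_data hfb
  set σp : Finset (Fin N) → Prop := fun I => 1 ≤ I.card ∧ I.card ≤ D + 1 with hσp
  have himg : ∀ (I : Finset (Fin N)), σp I → ∀ e : Event N, σp (I.image (extMap e)) := by
    intro I hI e
    constructor
    · rw [Nat.one_le_iff_ne_zero, ← Nat.pos_iff_ne_zero, Finset.card_pos]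
      exact Finset.Nonempty.image (Finset.card_pos.1 hI.1) _
    · exact le_trans (Finset.card_image_le) hI.2
  set B : Matrix {I // σp I} {I // σp I} ℝ := Matrix.of fun I J =>
    ∑ e : Event N, if I.val.image (extMap e) = J.val then p0 e else 0 with hB
  set imgσ : {I // σp I} → Event N → {I // σp I} :=
    fun I e => ⟨I.val.image (extMap e), himg I.val I.2 e⟩ with himgσ
  have hBapply : ∀ (v : {I // σp I} → ℝ) (I : {I // σp I}),
      B.mulVec v I = ∑ e : Event N, p0 e * v (imgσ I e) := by
    intro v I
    have h1 : B.mulVec v I = ∑ J : {I // σp I}, (∑ e : Event N,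
        if I.val.image (extMap e) = J.val then p0 e else 0) * v J := rfl
    rw [h1]
    have h2 : ∀ J : {I // σp I}, (∑ e : Event N,
        if I.val.image (extMap e) = J.val then p0 e else 0) * v J
        = ∑ e : Event N, (if I.val.image (extMap e) = J.val then p0 e * v J else 0) := by
      intro J
      rw [Finset.sum_mul]
      apply Finset.sum_congr rfl
      intro e _
      split <;> simp
    rw [Finset.sum_congr rfl fun J _ => h2 J, Finset.sum_comm]
    apply Finset.sum_congr rfl
    intro e _
    rw [Finset.sum_eq_single_of_mem (imgσ I e) (Finset.mem_univ _)]
    · simp [himgσ]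
    · intro J _ hJ
      have : ¬ (I.val.image (extMap e) = J.val) := by
        intro h
        apply hJ
        apply Subtype.ext
        rw [himgσ]
        exact h.symm
      simp [this]
  have hBnn : ∀ I J : {I // σp I}, 0 ≤ B I J := by
    intro I J
    apply Finset.sum_nonneg
    intro e _
    split
    · exact h0.1 e
    · exact le_refl 0
  have hBrow : ∀ I : {I // σp I}, ∑ J, B I J = 1 := by
    intro I
    have := hBapply (fun _ => 1) I
    have h1 : B.mulVec (fun _ => 1) I = ∑ J, B I J := by
      simp [Matrix.mulVec, dotProduct]
    rw [h1] at this
    rw [this]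
    simp [h0.2]
  -- the harmonic function
  set κ : ℝ := η1 {i0} - η2 {i0} with hκ
  have hi0 : σp ({i0} : Finset (Fin N)) := by
    constructor <;> simp [Finset.card_singleton]
  set v : {I // σp I} → ℝ := fun I => (η1 I.val - η2 I.val) - κ with hv
  have hharm : B.mulVec v = v := by
    funext I
    rw [hBapply v I]
    have h1 : ∀ e : Event N, p0 e * v (imgσ I e)
        = p0 e * (η1 (I.val.image (extMap e)) - η2 (I.val.image (extMap e))) - p0 e * κ := by
      intro e
      rw [hv]
      simp only [himgσ]
      ring
    rw [Finset.sum_congr rfl fun e _ => h1 e, Finset.sum_sub_distrib]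
    rw [← Finset.sum_mul, h0.2, one_mul]
    have h2 : ∑ e : Event N, p0 e * (η1 (I.val.image (extMap e)) - η2 (I.val.image (extMap e)))
        = (∑ e : Event N, p0 e * η1 (I.val.image (extMap e)))
          - ∑ e : Event N, p0 e * η2 (I.val.image (extMap e)) := by
      rw [← Finset.sum_sub_distrib]
      apply Finset.sum_congr rfl
      intro e _
      ring
    rw [h2]
    have e1 := hr1 I.val I.2.1 I.2.2
    have e2 := hr2 I.val I.2.1 I.2.2
    rw [hv]
    simp only []
    linarith
  -- the path bound
  set Ze : {I // σp I} := ⟨({i0} : Finset (Fin N)), hi0⟩ with hZe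
  have hstep : ∀ (I : {I // σp I}) (e : Event N), p0 e ≤ B I (imgσ I e) := by
    intro I e
    have h1 : B I (imgσ I e) = ∑ e' : Event N,
        if I.val.image (extMap e') = I.val.image (extMap e) then p0 e' else 0 := rfl
    rw [h1]
    have : p0 e = if I.val.image (extMap e) = I.val.image (extMap e) then p0 e else 0 := by simp
    rw [this]
    apply Finset.single_le_sum (f := fun e' =>
      if I.val.image (extMap e') = I.val.image (extMap e) then p0 e' else 0)
    · intro e' _
      split
      · exact h0.1 e'
      · exact le_refl 0
    · exact Finset.mem_univ e
  have hfoldval : ∀ (l' : List (Event N)) (I : {I // σp I}),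
      (l'.foldl imgσ I).val = l'.foldl (fun J e => J.image (extMap e)) I.val := by
    intro l'
    induction l' with
    | nil => intro I; rfl
    | cons e t ih => intro I; simp only [List.foldl_cons]; rw [ih]
  have hpath : ∀ I : {I // σp I},
      (l.reverse.map p0).prod ≤ (B ^ l.reverse.length) I Ze := by
    intro I
    have hp := path_bound B hBnn p0 h0.1 imgσ hstep l.reverse I
    have hfin : l.reverse.foldl imgσ I = Ze := by
      apply Subtype.ext
      rw [hfoldval, foldl_image, List.reverse_reverse]
      have hne : I.val.Nonempty := Finset.card_pos.1 I.2.1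
      have : I.val.image ((l.map extMap).foldr (· ∘ ·) id) = I.val.image (fun _ => i0) :=
        Finset.image_congr (fun j _ => hlcomp j)
      rw [this, Finset.image_const hne]
    rw [hfin] at hp
    exact hp
  set β : ℝ := (l.reverse.map p0).prod with hβdef
  have hβ : 0 < β := by
    apply List.prod_pos
    intro a ha
    obtain ⟨e, he, rfl⟩ := List.mem_map.1 ha
    exact hlpos e (List.mem_reverse.1 he)
  have hbound : ∀ I : {I // σp I}, β ≤ ∑ z ∈ ({Ze} : Finset {I // σp I}),
      (B ^ l.reverse.length) I z := by
    intro I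
    rw [Finset.sum_singleton]
    exact hpath I
  have hZzero : ∀ z ∈ ({Ze} : Finset {I // σp I}), v z = 0 := by
    intro z hz
    rw [Finset.mem_singleton.1 hz, hv]
    simp [hZe, hκ]
  have hvz := harmonic_eq_zero B hBnn hBrow v hharm {Ze} hZzero l.reverse.length β hβ hbound
  -- conclude κ = 0
  have hconst : ∀ I : {I // σp I}, η1 I.val - η2 I.val = κ := by
    intro I
    have := hvz I
    rw [hv] at this
    simp only [] at this
    linarith
  have hκ0 : κ = 0 := by
    have h1 : ∀ i : Fin N, η1 {i} - η2 {i} = κ := by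
      intro i
      have hip : σp ({i} : Finset (Fin N)) := by
        constructor <;> simp [Finset.card_singleton]
      exact hconst ⟨{i}, hip⟩
    have h2 : ∑ i, π i * (η1 {i} - η2 {i}) = κ := by
      rw [Finset.sum_congr rfl fun i _ => by rw [h1 i]]
      rw [← Finset.sum_mul, hπ2, one_mul]
    have h3 : ∑ i, π i * (η1 {i} - η2 {i}) = 0 := by
      rw [Finset.sum_congr rfl fun i _ => (by ring :
        π i * (η1 {i} - η2 {i}) = π i * η1 {i} - π i * η2 {i})]
      rw [Finset.sum_sub_distrib, hn1, hn2]
      ring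
    rw [← h2, h3]
  intro I h1 h2
  have := hconst ⟨I, ⟨h1, h2⟩⟩
  rw [hκ0] at this
  linarith

end Part7
section Part8
variable {N : ℕ}

lemma contDiffAt_finset_prod {ι : Type*} [DecidableEq ι] (s : Finset ι) (f : ι → ℝ → ℝ)
    (hf : ∀ i ∈ s, ContDiffAt ℝ 1 (f i) 0) :
    ContDiffAt ℝ 1 (fun δ => ∏ i ∈ s, f i δ) 0 := by
  induction s using Finset.cons_induction with
  | empty => simpa using contDiffAt_const
  | cons a s ha ih =>
    have : (fun δ => ∏ i ∈ Finset.cons a s ha, f i δ)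
        = fun δ => f a δ * ∏ i ∈ s, f i δ := funext fun δ => Finset.prod_cons ha
    rw [this]
    exact (hf a (Finset.mem_cons_self a s)).mul
      (ih fun i hi => hf i (Finset.mem_cons.2 (Or.inr hi)))

lemma contDiffAt_det {α : Type*} [Fintype α] [DecidableEq α] (A : ℝ → Matrix α α ℝ)
    (hA : ∀ i j, ContDiffAt ℝ 1 (fun δ => A δ i j) 0) :
    ContDiffAt ℝ 1 (fun δ => (A δ).det) 0 := by
  have h1 : (fun δ => (A δ).det)
      = fun δ => ∑ σ : Equiv.Perm α, ((Equiv.Perm.sign σ : ℤ) : ℝ) * ∏ i, A δ (σ i) i := by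
    funext δ
    rw [Matrix.det_apply]
    apply Finset.sum_congr rfl
    intro σ _
    rw [Units.smul_def, zsmul_eq_mul]
  rw [h1]
  apply ContDiffAt.sum
  intro σ _
  exact contDiffAt_const.mul (contDiffAt_finset_prod _ _ fun i _ => hA (σ i) i)

lemma contDiffAt_adjugate {α : Type*} [Fintype α] [DecidableEq α] (A : ℝ → Matrix α α ℝ)
    (hA : ∀ i j, ContDiffAt ℝ 1 (fun δ => A δ i j) 0) (k l : α) :
    ContDiffAt ℝ 1 (fun δ => (A δ).adjugate k l) 0 := by
  have h1 : (fun δ => (A δ).adjugate k l)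
      = fun δ => ((A δ).updateRow l (Pi.single k 1)).det :=
    funext fun δ => Matrix.adjugate_apply (A δ) k l
  rw [h1]
  apply contDiffAt_det
  intro i j
  by_cases h : i = l
  · have : (fun δ => ((A δ).updateRow l (Pi.single k 1)) i j)
        = fun _ : ℝ => (Pi.single k (1:ℝ) : α → ℝ) j := by
      funext δ
      rw [Matrix.updateRow_apply, if_pos h]
    rw [this]
    exact contDiffAt_const
  · have : (fun δ => ((A δ).updateRow l (Pi.single k 1)) i j) = fun δ => A δ i j := by
      funext δ
      rw [Matrix.updateRow_apply, if_neg h]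
    rw [this]
    exact hA i j

end Part8
section Part9
variable {N : ℕ}

lemma rho_props {q : St N → Event N → ℝ} (hq : IsRule q) (hAB : stA N ≠ stB N)
    (r : St N → ℝ)
    (hr : ∀ ξ : St N, Filter.Tendsto (fun t : ℕ => (tmat q ^ t) ξ (stA N))
      Filter.atTop (𝓝 (r ξ))) :
    r (stA N) = 1 ∧ r (stB N) = 0 ∧
      ∀ ξ : St N, r ξ = ∑ y : St N, tmat q ξ y * r y := by
  have powA : ∀ t : ℕ, (tmat q ^ t) (stA N) (stA N) = 1 := by
    intro t
    induction t with
    | zero => simp [Matrix.one_apply]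
    | succ t ih =>
      rw [pow_succ', Matrix.mul_apply]
      calc ∑ y : St N, tmat q (stA N) y * (tmat q ^ t) y (stA N)
          = ∑ y : St N, (if y = stA N then 1 else 0) * (tmat q ^ t) y (stA N) := by
            apply Finset.sum_congr rfl
            intro y _
            rw [tmat_apply_stA q hq.2]
        _ = 1 := by simp [ih]
  have powB : ∀ t : ℕ, (tmat q ^ t) (stB N) (stA N) = 0 := by
    intro t
    induction t with
    | zero => simp [Matrix.one_apply, Ne.symm hAB]
    | succ t ih =>
      rw [pow_succ', Matrix.mul_apply]
      calc ∑ y : St N, tmat q (stB N) y * (tmat q ^ t) y (stA N)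
          = ∑ y : St N, (if y = stB N then 1 else 0) * (tmat q ^ t) y (stA N) := by
            apply Finset.sum_congr rfl
            intro y _
            rw [tmat_apply_stB q hq.2]
        _ = 0 := by simp [ih]
  refine ⟨?_, ?_, ?_⟩
  · have h1 : Filter.Tendsto (fun t : ℕ => (tmat q ^ t) (stA N) (stA N))
        Filter.atTop (𝓝 1) := by
      have : (fun t : ℕ => (tmat q ^ t) (stA N) (stA N)) = fun _ => 1 := funext powA
      rw [this]
      exact tendsto_const_nhds
    exact tendsto_nhds_unique (hr (stA N)) h1
  · have h1 : Filter.Tendsto (fun t : ℕ => (tmat q ^ t) (stB N) (stA N))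
        Filter.atTop (𝓝 0) := by
      have : (fun t : ℕ => (tmat q ^ t) (stB N) (stA N)) = fun _ => 0 := funext powB
      rw [this]
      exact tendsto_const_nhds
    exact tendsto_nhds_unique (hr (stB N)) h1
  · intro ξ
    have h1 : Filter.Tendsto (fun t : ℕ => (tmat q ^ (t + 1)) ξ (stA N))
        Filter.atTop (𝓝 (r ξ)) := by
      have := (hr ξ).comp (Filter.tendsto_add_atTop_nat 1)
      exact this
    have h2 : (fun t : ℕ => (tmat q ^ (t + 1)) ξ (stA N))
        = fun t : ℕ => ∑ y : St N, tmat q ξ y * (tmat q ^ t) y (stA N) := by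
      funext t
      rw [pow_succ', Matrix.mul_apply]
    rw [h2] at h1
    have h3 : Filter.Tendsto (fun t : ℕ => ∑ y : St N, tmat q ξ y * (tmat q ^ t) y (stA N))
        Filter.atTop (𝓝 (∑ y : St N, tmat q ξ y * r y)) := by
      apply tendsto_finset_sum
      intro y _
      exact (hr y).const_mul _
    exact tendsto_nhds_unique h1 h3

end Part9
section Part10
variable {N : ℕ}

lemma lamF_sub (p0 : Event N → ℝ) (μ0 : St N → ℝ) (φ1 φ2 : St N → ℝ) :
    lamF p0 μ0 (fun x => φ1 x - φ2 x) = lamF p0 μ0 φ1 - lamF p0 μ0 φ2 := by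
  unfold lamF
  rw [← Finset.sum_sub_distrib]
  apply Finset.sum_congr rfl
  intro x _
  have h1 : (fun y : τt N => φ1 y.val - φ2 y.val)
      = (fun y : τt N => φ1 y.val) - (fun y : τt N => φ2 y.val) := rfl
  rw [h1, Matrix.mulVec_sub]
  simp only [Pi.sub_apply]
  ring

lemma single_site_general (w : Event N → ℝ) (x : St N) (i : Fin N) :
    ∑ e : Event N, w e * bv (x (extMap e i))
      = (∑ e : Event N, w e) * bv (x i)
        + ∑ j : Fin N, emarg w j i * (bv (x j) - bv (x i)) := by
  have h1 : ∀ e : Event N, w e * bv (x (extMap e i))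
      = w e * bv (x i) + (if i ∈ e.1 then w e * (bv (x (e.2 i)) - bv (x i)) else 0) := by
    intro e
    by_cases h : i ∈ e.1
    · simp only [extMap, h, if_true]
      ring
    · simp only [extMap, h, if_false]
      ring
  rw [Finset.sum_congr rfl fun e _ => h1 e, Finset.sum_add_distrib, ← Finset.sum_mul]
  congr 1
  exact sum_fiber_emarg w i (fun j => bv (x j) - bv (x i))

lemma derivWithin_unique_Ici {f : ℝ → ℝ} {a b : ℝ}
    (h1 : HasDerivWithinAt f a (Set.Ici 0) 0) (h2 : HasDerivWithinAt f b (Set.Ici 0) 0) :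
    a = b := by
  have hu := (uniqueDiffOn_Ici (0:ℝ)) 0 Set.self_mem_Ici
  rw [← h1.derivWithin hu, ← h2.derivWithin hu]

lemma Ico_mem_nhdsWithin_Ici {ε : ℝ} (hε : 0 < ε) :
    Set.Ico (0:ℝ) ε ∈ 𝓝[Set.Ici 0] (0:ℝ) := by
  rw [← Set.Ici_inter_Iio]
  exact Filter.inter_mem self_mem_nhdsWithin
    (mem_nhdsWithin_of_mem_nhds (Iio_mem_nhds hε))

end Part10
/-- for a mutant-appearance distribution `μ_A` (possibly depending smoothly on
`δ`), the derivative at `δ = 0` of the expected fixation probability `E_{μ_A}[ρ_A]` equals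
`(d/dδ)|₀ E_{μ_A}[ξ̂] + Σ_i π_i Σ_j Σ_{|I| ≤ D_{ji}} c^{ji}_I (η^{μ_A}_{{i}∪I} − η^{μ_A}_{{j}∪I})`,
where `η^{μ_A}` solves the corresponding (uniquely solvable) system. -/
theorem statement8 {N : ℕ} (p : ℝ → St N → Event N → ℝ) (ε : ℝ) (hε : 0 < ε)
    (hrule : ∀ δ ∈ Set.Ico (0 : ℝ) ε, IsRule (p δ))
    (hfix : ∀ δ ∈ Set.Ico (0 : ℝ) ε, FixAxiom (p δ))
    (hsm : ∀ x e, ContDiffAt ℝ (⊤ : ℕ∞) (fun d => p d x e) 0)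
    (p0 : Event N → ℝ) (hneut : ∀ x e, p 0 x e = p0 e)
    (π : Fin N → ℝ) (hπ : IsRV p0 π)
    (μ : ℝ → St N → ℝ)
    (hμ : ∀ δ ∈ Set.Ico (0 : ℝ) ε, (∀ x, 0 ≤ μ δ x) ∧ (∑ x : St N, μ δ x = 1) ∧
      μ δ (stA N) = 0 ∧ μ δ (stB N) = 0)
    (μ' : St N → ℝ)
    (hμ' : ∀ x, HasDerivWithinAt (fun δ => μ δ x) (μ' x) (Set.Ici 0) 0)
    (c : Fin N → Fin N → Finset (Fin N) → ℝ)
    (hc : ∀ i j (x : St N), deriv (fun d => emarg (p d x) i j) 0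
        = ∑ I : Finset (Fin N), c i j I * prodI x I)
    (η : Finset (Fin N) → ℝ)
    (hη : EtaSystem p0 π
      (fun I => ∑ x : St N, μ 0 x * (hatx π x - prodI x I)) (Dmax c) η)
    (ρ : ℝ → St N → ℝ)
    (hρ : ∀ δ ∈ Set.Ico (0 : ℝ) ε, ∀ ξ : St N,
      Tendsto (fun t : ℕ => (tmat (p δ) ^ t) ξ (stA N)) atTop (𝓝 (ρ δ ξ))) :
    HasDerivWithinAt (fun δ => ∑ ξ : St N, μ δ ξ * ρ δ ξ)
      ((∑ ξ : St N, μ' ξ * hatx π ξ) +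
        ∑ i, π i * ∑ j,
          ∑ I ∈ Finset.univ.filter (fun I : Finset (Fin N) => I.card ≤ Dij c j i),
            c j i I * (η (insert i I) - η (insert j I)))
      (Set.Ici 0) 0 := by
  classical
  -- basic δ = 0 facts
  have h00 : (0:ℝ) ∈ Set.Ico (0:ℝ) ε := ⟨le_refl 0, hε⟩
  have hp0eq : p 0 = fun _ e => p0 e := funext fun x => funext fun e => hneut x e
  have h0 : IsDist p0 := by
    constructor
    · intro e
      have := (hrule 0 h00).1 (stA N) e
      rwa [hneut] at this
    · have h1 := (hrule 0 h00).2 (stA N)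
      calc ∑ e : Event N, p0 e = ∑ e : Event N, p 0 (stA N) e := by
            apply Finset.sum_congr rfl
            intro e _
            rw [hneut]
        _ = 1 := h1
  have hfix0 : FixAxiom (fun _ : St N => p0) := by
    have := hfix 0 h00
    rwa [hp0eq] at this
  have hAB : stA N ≠ stB N := by
    obtain ⟨i0, -, -, -, -, -, -⟩ := hfix0
    intro h
    have := congrFun h i0
    simp [stA, stB] at this
  have hπ2 : ∑ i, π i = 1 := hπ.2
  -- matrices depending on δ
  set Qd : ℝ → Matrix (τt N) (τt N) ℝ := fun δ => Qmat (p δ) with hQd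
  set Ad : ℝ → Matrix (τt N) (τt N) ℝ := fun δ => 1 - Qd δ with hAd
  set bd : ℝ → τt N → ℝ := fun δ x => tmat (p δ) x.val (stA N) with hbd
  have hQ0eq : Qd 0 = Qmat (fun _ => p0) := by rw [hQd]; simp only []; rw [hp0eq]
  have hA0eq : Ad 0 = 1 - Qmat (fun _ => p0) := by rw [hAd]; simp only []; rw [hQ0eq]
  have hb0eq : bd 0 = fun x : τt N => tmat (fun _ => p0) x.val (stA N) := by
    rw [hbd]; simp only []; rw [hp0eq]
  have hdet0 : (Ad 0).det ≠ 0 := by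
    rw [hA0eq]
    exact det_ne_zero_of_fix h0 hfix0 hAB
  -- smoothness of entries
  have hentry : ∀ x y : St N, ContDiffAt ℝ 1 (fun δ => tmat (p δ) x y) 0 := by
    intro x y
    have h1 : (fun δ => tmat (p δ) x y)
        = fun δ => ∑ e : Event N, if upd e x = y then p δ x e else 0 := rfl
    rw [h1]
    apply ContDiffAt.sum
    intro e _
    by_cases h : upd e x = y
    · simp only [h, if_true]
      exact (hsm x e).of_le (by simp)
    · simp only [h, if_false]
      exact contDiffAt_const
  have hAentry : ∀ x y : τt N, ContDiffAt ℝ 1 (fun δ => Ad δ x y) 0 := by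
    intro x y
    have h1 : (fun δ => Ad δ x y)
        = fun δ => (1 : Matrix (τt N) (τt N) ℝ) x y - tmat (p δ) x.val y.val := by
      funext δ
      rw [hAd]
      simp only [Matrix.sub_apply]
      rfl
    rw [h1]
    exact (contDiffAt_const).sub (hentry x.val y.val)
  -- derivatives of entries
  set dp : St N → Event N → ℝ := fun x e => deriv (fun δ => p δ x e) 0 with hdp
  have hdpD : ∀ x e, HasDerivAt (fun δ => p δ x e) (dp x e) 0 := fun x e =>
    ((hsm x e).differentiableAt (by simp)).hasDerivAt
  have hPder : ∀ x y : St N, HasDerivAt (fun δ => tmat (p δ) x y) (tmat dp x y) 0 := by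
    intro x y
    have h1 : (fun δ => tmat (p δ) x y)
        = fun δ => ∑ e : Event N, if upd e x = y then p δ x e else 0 := rfl
    have h2 : tmat dp x y = ∑ e : Event N, if upd e x = y then dp x e else 0 := rfl
    rw [h1, h2]
    apply HasDerivAt.fun_sum
    intro e _
    by_cases h : upd e x = y
    · simp only [h, if_true]
      exact hdpD x e
    · simp only [h, if_false]
      exact hasDerivAt_const 0 0
  -- the determinant function
  set hd : ℝ → ℝ := fun δ => (Ad δ).det with hhd
  have hdetC : ContDiffAt ℝ 1 hd 0 := contDiffAt_det Ad hAentry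
  have hevent : ∀ᶠ δ in 𝓝 (0:ℝ), hd δ ≠ 0 := hdetC.continuousAt.eventually_ne hdet0
  -- the candidate solution vector ψ
  set ψ : ℝ → τt N → ℝ := fun δ x => (hd δ)⁻¹ * ((Ad δ).adjugate.mulVec (bd δ)) x with hψdef
  have hψdiff : ∀ x : τt N, DifferentiableAt ℝ (fun δ => ψ δ x) 0 := by
    intro x
    apply DifferentiableAt.mul
    · exact ((hdetC.differentiableAt one_ne_zero)).inv hdet0
    · have h1 : (fun δ => ((Ad δ).adjugate.mulVec (bd δ)) x)
          = fun δ => ∑ y : τt N, (Ad δ).adjugate x y * bd δ y := rfl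
      rw [h1]
      apply DifferentiableAt.fun_sum
      intro y _
      exact ((contDiffAt_adjugate Ad hAentry x y).differentiableAt one_ne_zero).mul
        ((hentry y.val (stA N)).differentiableAt one_ne_zero)
  -- the linear identity satisfied by ψ whenever the determinant is nonzero
  have hid : ∀ δ : ℝ, hd δ ≠ 0 → (Ad δ).mulVec (ψ δ) = bd δ := by
    intro δ hδ
    have hψs : ψ δ = (hd δ)⁻¹ • ((Ad δ).adjugate.mulVec (bd δ)) := rfl
    rw [hψs, Matrix.mulVec_smul, Matrix.mulVec_mulVec, Matrix.mul_adjugate,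
      Matrix.smul_mulVec, Matrix.one_mulVec, smul_smul, inv_mul_cancel₀ hδ, one_smul]
  -- ψ at 0 equals the reproductive-value-weighted frequency
  have hψ0 : ψ 0 = fun x : τt N => hatx π x.val := by
    have hsys := Amat_mulVec_hatx h0 hπ hAB
    rw [← hA0eq, ← hb0eq] at hsys
    have := solve_by_adjugate hdet0 hsys
    funext x
    rw [hψdef]
    simp only []
    rw [← congrFun this x]
  -- the derivative of ψ
  set ψ' : τt N → ℝ := fun x => deriv (fun δ => ψ δ x) 0 with hψ'def
  have hψD : ∀ x : τt N, HasDerivAt (fun δ => ψ δ x) (ψ' x) 0 := fun x =>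
    (hψdiff x).hasDerivAt
  have hAder : ∀ x y : τt N, HasDerivAt (fun δ => Ad δ x y) (-(tmat dp x.val y.val)) 0 := by
    intro x y
    have h1 : (fun δ => Ad δ x y)
        = fun δ => (1 : Matrix (τt N) (τt N) ℝ) x y - tmat (p δ) x.val y.val := by
      funext δ
      rw [hAd]
      simp only [Matrix.sub_apply]
      rfl
    rw [h1]
    exact (hPder x.val y.val).const_sub _
  -- implicit differentiation of the identity
  have himpl : ∀ x : τt N,
      ∑ y : τt N, (-(tmat dp x.val y.val) * hatx π y.val + Ad 0 x y * ψ' y)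
        = tmat dp x.val (stA N) := by
    intro x
    have hLHS : HasDerivAt (fun δ => ∑ y : τt N, Ad δ x y * ψ δ y)
        (∑ y : τt N, (-(tmat dp x.val y.val) * hatx π y.val + Ad 0 x y * ψ' y)) 0 := by
      apply HasDerivAt.fun_sum
      intro y _
      have := (hAder x y).mul (hψD y)
      have hval : ψ 0 y = hatx π y.val := congrFun hψ0 y
      rw [hval] at this
      exact this
    have hRHS : HasDerivAt (fun δ => bd δ x) (tmat dp x.val (stA N)) 0 := by
      have h1 : (fun δ => bd δ x) = fun δ => tmat (p δ) x.val (stA N) := rfl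
      rw [h1]
      exact hPder x.val (stA N)
    have heq : (fun δ => ∑ y : τt N, Ad δ x y * ψ δ y) =ᶠ[𝓝 (0:ℝ)] fun δ => bd δ x := by
      filter_upwards [hevent] with δ hδ
      have := congrFun (hid δ hδ) x
      exact this
    have hRHS2 : HasDerivAt (fun δ => ∑ y : τt N, Ad δ x y * ψ δ y)
        (tmat dp x.val (stA N)) 0 := hRHS.congr_of_eventuallyEq heq
    exact hLHS.unique hRHS2
  -- rewrite as a matrix-vector equation
  set g : St N → ℝ := fun x => ∑ e : Event N, dp x e * hatx π (upd e x) with hgdef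
  have hgA : (Ad 0).mulVec ψ' = fun x : τt N => g x.val := by
    funext x
    have h1 := himpl x
    have h2 : ∑ y : τt N, (-(tmat dp x.val y.val) * hatx π y.val + Ad 0 x y * ψ' y)
        = (Ad 0).mulVec ψ' x - ∑ y : τt N, tmat dp x.val y.val * hatx π y.val := by
      rw [Finset.sum_add_distrib]
      have h5 : (Ad 0).mulVec ψ' x = ∑ y : τt N, Ad 0 x y * ψ' y := rfl
      rw [h5]
      have h6 : ∑ y : τt N, -(tmat dp x.val y.val) * hatx π y.val
          = -(∑ y : τt N, tmat dp x.val y.val * hatx π y.val) := by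
        rw [← Finset.sum_neg_distrib]
        apply Finset.sum_congr rfl
        intro y _
        ring
      rw [h6]
      ring
    rw [h2] at h1
    have h3 := sum_split hAB (fun y => tmat dp x.val y * hatx π y)
    have h4 : ∑ y : St N, tmat dp x.val y * hatx π y = g x.val := by
      rw [tmat_mulVec_apply dp (hatx π) x.val]
    rw [hatx_stA hπ2, hatx_stB] at h3
    rw [h4] at h3
    simp only [mul_one, mul_zero, add_zero] at h3
    linarith
  -- solve for ψ'
  have hψ'val : ψ' = (Ad 0)⁻¹.mulVec (fun y : τt N => g y.val) := by
    have hunit : IsUnit (Ad 0).det := isUnit_iff_ne_zero.2 hdet0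
    calc ψ' = (1 : Matrix (τt N) (τt N) ℝ).mulVec ψ' := (Matrix.one_mulVec ψ').symm
      _ = ((Ad 0)⁻¹ * Ad 0).mulVec ψ' := by rw [Matrix.nonsing_inv_mul (Ad 0) hunit]
      _ = (Ad 0)⁻¹.mulVec ((Ad 0).mulVec ψ') := (Matrix.mulVec_mulVec ψ' (Ad 0)⁻¹ (Ad 0)).symm
      _ = (Ad 0)⁻¹.mulVec (fun y : τt N => g y.val) := by rw [hgA]
  -- total derivative of the event probabilities is zero
  have hdpsum : ∀ x : St N, ∑ e : Event N, dp x e = 0 := by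
    intro x
    have hD1 : HasDerivAt (fun δ => ∑ e : Event N, p δ x e) (∑ e : Event N, dp x e) 0 :=
      HasDerivAt.fun_sum fun e _ => hdpD x e
    have hev : (fun _ : ℝ => (1:ℝ)) =ᶠ[𝓝[Set.Ici 0] (0:ℝ)]
        (fun δ => ∑ e : Event N, p δ x e) := by
      filter_upwards [Ico_mem_nhdsWithin_Ici hε] with δ hδ
      exact ((hrule δ hδ).2 x).symm
    have hD2 : HasDerivWithinAt (fun _ : ℝ => (1:ℝ)) (∑ e : Event N, dp x e)
        (Set.Ici 0) 0 :=
      (hD1.hasDerivWithinAt).congr_of_eventuallyEq hev ((hrule 0 h00).2 x).symm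
    exact (derivWithin_unique_Ici hD2 (hasDerivWithinAt_const 0 _ 1)).symm ▸ rfl
  -- derivative of emarg
  have hcmarg : ∀ (i j : Fin N) (x : St N),
      emarg (dp x) j i = ∑ I : Finset (Fin N), c j i I * prodI x I := by
    intro i j x
    have hD : HasDerivAt (fun d => emarg (p d x) j i) (emarg (dp x) j i) 0 := by
      have h1 : (fun d => emarg (p d x) j i)
          = fun d => ∑ e : Event N, if i ∈ e.1 ∧ e.2 i = j then p d x e else 0 := rfl
      have h2 : emarg (dp x) j i
          = ∑ e : Event N, if i ∈ e.1 ∧ e.2 i = j then dp x e else 0 := rfl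
      rw [h1, h2]
      apply HasDerivAt.fun_sum
      intro e _
      by_cases h : i ∈ e.1 ∧ e.2 i = j
      · simp only [h, if_true]
        exact hdpD x e
      · simp only [h, if_false]
        exact hasDerivAt_const 0 0
    rw [← hD.deriv]
    exact hc j i x
  -- decomposition of g
  have hgdecomp : ∀ x : St N, g x
      = ∑ z : Fin N × Fin N × Finset (Fin N), (π z.1 * c z.2.1 z.1 z.2.2) *
        ((hatx π x - prodI x (insert z.1 z.2.2)) - (hatx π x - prodI x (insert z.2.1 z.2.2))) := by
    intro x
    have h1 : g x = ∑ i, π i * ∑ e : Event N, dp x e * bv (x (extMap e i)) := by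
      rw [hgdef]
      simp only []
      unfold hatx upd
      simp only [Finset.mul_sum]
      rw [Finset.sum_comm]
      apply Finset.sum_congr rfl
      intro i _
      apply Finset.sum_congr rfl
      intro e _
      ring
    have h2 : ∀ i : Fin N, ∑ e : Event N, dp x e * bv (x (extMap e i))
        = ∑ j, ∑ I : Finset (Fin N),
            c j i I * (prodI x (insert j I) - prodI x (insert i I)) := by
      intro i
      rw [single_site_general (dp x) x i, hdpsum x, zero_mul, zero_add]
      apply Finset.sum_congr rfl
      intro j _
      rw [hcmarg i j x, Finset.sum_mul]
      apply Finset.sum_congr rfl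
      intro I _
      have hj : prodI x I * bv (x j) = prodI x (insert j I) := by
        rw [mul_comm]; exact bv_mul_prodI x j I
      have hi : prodI x I * bv (x i) = prodI x (insert i I) := by
        rw [mul_comm]; exact bv_mul_prodI x i I
      calc c j i I * prodI x I * (bv (x j) - bv (x i))
          = c j i I * (prodI x I * bv (x j) - prodI x I * bv (x i)) := by ring
        _ = c j i I * (prodI x (insert j I) - prodI x (insert i I)) := by rw [hj, hi]
    rw [h1, Finset.sum_congr rfl fun i _ => by rw [h2 i]]
    rw [Fintype.sum_prod_type]
    apply Finset.sum_congr rfl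
    intro i _
    rw [Fintype.sum_prod_type, Finset.mul_sum]
    apply Finset.sum_congr rfl
    intro j _
    rw [Finset.mul_sum]
    apply Finset.sum_congr rfl
    intro I _
    simp only []
    ring
  -- μ' vanishes at absorbing states
  have hμ'A : μ' (stA N) = 0 := by
    have hz : (fun _ : ℝ => (0:ℝ)) =ᶠ[𝓝[Set.Ici 0] (0:ℝ)] fun δ => μ δ (stA N) := by
      filter_upwards [Ico_mem_nhdsWithin_Ici hε] with δ hδ
      exact ((hμ δ hδ).2.2.1).symm
    have h1 : HasDerivWithinAt (fun _ : ℝ => (0:ℝ)) (μ' (stA N)) (Set.Ici 0) 0 :=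
      (hμ' (stA N)).congr_of_eventuallyEq hz ((hμ 0 h00).2.2.1).symm
    exact (derivWithin_unique_Ici h1 (hasDerivWithinAt_const 0 _ 0)).symm ▸ rfl
  have hμ'B : μ' (stB N) = 0 := by
    have hz : (fun _ : ℝ => (0:ℝ)) =ᶠ[𝓝[Set.Ici 0] (0:ℝ)] fun δ => μ δ (stB N) := by
      filter_upwards [Ico_mem_nhdsWithin_Ici hε] with δ hδ
      exact ((hμ δ hδ).2.2.2).symm
    have h1 : HasDerivWithinAt (fun _ : ℝ => (0:ℝ)) (μ' (stB N)) (Set.Ici 0) 0 :=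
      (hμ' (stB N)).congr_of_eventuallyEq hz ((hμ 0 h00).2.2.2).symm
    exact (derivWithin_unique_Ici h1 (hasDerivWithinAt_const 0 _ 0)).symm ▸ rfl
  -- F agrees with the ψ-sum near 0 from the right
  have key : ∀ δ : ℝ, δ ∈ Set.Ico 0 ε → hd δ ≠ 0 →
      (∑ ξ : St N, μ δ ξ * ρ δ ξ) = ∑ x : τt N, μ δ x.val * ψ δ x := by
    intro δ hδI hδd
    obtain ⟨hrA, hrB, hharm⟩ := rho_props (hrule δ hδI) hAB (ρ δ) (hρ δ hδI)
    have hsys : (Ad δ).mulVec (fun x : τt N => ρ δ x.val) = bd δ := by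
      funext x
      have hsplit := sum_split hAB (fun y => tmat (p δ) x.val y * ρ δ y)
      rw [← hharm x.val, hrA, hrB, mul_one, mul_zero, add_zero] at hsplit
      have h1 : (Ad δ).mulVec (fun x : τt N => ρ δ x.val) x
          = ρ δ x.val - ∑ y : τt N, tmat (p δ) x.val y.val * ρ δ y.val := by
        have h2 : (Ad δ).mulVec (fun x : τt N => ρ δ x.val) x
            = ∑ y : τt N, (Ad δ) x y * ρ δ y.val := rfl
        rw [h2]
        have h3 : ∀ y : τt N, (Ad δ) x y * ρ δ y.val
            = (1 : Matrix (τt N) (τt N) ℝ) x y * ρ δ y.val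
              - tmat (p δ) x.val y.val * ρ δ y.val := by
          intro y
          have : (Ad δ) x y
              = (1 : Matrix (τt N) (τt N) ℝ) x y - tmat (p δ) x.val y.val := by
            rw [hAd]
            simp only [Matrix.sub_apply]
            rfl
          rw [this]
          ring
        rw [Finset.sum_congr rfl fun y _ => h3 y, Finset.sum_sub_distrib]
        have h4 : ∑ y : τt N, (1 : Matrix (τt N) (τt N) ℝ) x y * ρ δ y.val
            = ρ δ x.val := by
          have := congrFun (Matrix.one_mulVec (fun y : τt N => ρ δ y.val)) x
          exact this
        rw [h4]
      have h5 : bd δ x = tmat (p δ) x.val (stA N) := rfl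
      rw [h1, h5]
      linarith
    have hρψ : (fun x : τt N => ρ δ x.val) = ψ δ := by
      have := solve_by_adjugate hδd hsys
      rw [this]
    have hsplit2 := sum_split hAB (fun ξ => μ δ ξ * ρ δ ξ)
    rw [(hμ δ hδI).2.2.1, (hμ δ hδI).2.2.2, zero_mul, zero_mul, zero_add, zero_add] at hsplit2
    rw [hsplit2]
    apply Finset.sum_congr rfl
    intro x _
    rw [← congrFun hρψ x]
  -- the derivative of the ψ-sum
  have hGd : HasDerivWithinAt (fun δ => ∑ x : τt N, μ δ x.val * ψ δ x)
      (∑ x : τt N, (μ' x.val * hatx π x.val + μ 0 x.val * ψ' x)) (Set.Ici 0) 0 := by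
    apply HasDerivWithinAt.fun_sum
    intro x _
    have h1 := (hμ' x.val).mul ((hψD x).hasDerivWithinAt)
    rw [congrFun hψ0 x] at h1
    exact h1
  have hFG : (fun δ => ∑ ξ : St N, μ δ ξ * ρ δ ξ) =ᶠ[𝓝[Set.Ici 0] (0:ℝ)]
      fun δ => ∑ x : τt N, μ δ x.val * ψ δ x := by
    have hev2 : ∀ᶠ δ in 𝓝[Set.Ici 0] (0:ℝ), hd δ ≠ 0 :=
      hevent.filter_mono nhdsWithin_le_nhds
    filter_upwards [Ico_mem_nhdsWithin_Ici hε, hev2] with δ h1 h2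
    exact key δ h1 h2
  have hFd : HasDerivWithinAt (fun δ => ∑ ξ : St N, μ δ ξ * ρ δ ξ)
      (∑ x : τt N, (μ' x.val * hatx π x.val + μ 0 x.val * ψ' x)) (Set.Ici 0) 0 :=
    hGd.congr_of_eventuallyEq hFG (key 0 h00 hdet0)
  -- identify the derivative value
  have hdet0' : ((1 : Matrix (τt N) (τt N) ℝ) - Qmat (fun _ => p0)).det ≠ 0 := by
    rw [← hA0eq]
    exact hdet0
  have huniq : ∀ J : Finset (Fin N), 1 ≤ J.card → J.card ≤ Dmax c + 1 →
      η J = etaStar p0 (μ 0) π J := by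
    apply eta_unique h0 hfix0 hπ2 (Dmax c)
      (fun I => ∑ x : St N, μ 0 x * (hatx π x - prodI x I))
    · exact hη.1
    · intro I h1 _
      exact etaStar_recursion h0 hπ hAB hdet0' (μ 0) ((hμ 0 h00).2.2.1) ((hμ 0 h00).2.2.2)
        (Finset.card_pos.1 h1)
    · exact hη.2
    · exact etaStar_norm hπ2 (μ 0)
  have hval : (∑ x : τt N, (μ' x.val * hatx π x.val + μ 0 x.val * ψ' x))
      = (∑ ξ : St N, μ' ξ * hatx π ξ) +
        ∑ i, π i * ∑ j,
          ∑ I ∈ Finset.univ.filter (fun I : Finset (Fin N) => I.card ≤ Dij c j i),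
            c j i I * (η (insert i I) - η (insert j I)) := by
    rw [Finset.sum_add_distrib]
    congr 1
    · -- first piece
      have hsplit := sum_split hAB (fun ξ => μ' ξ * hatx π ξ)
      rw [hμ'A, hμ'B, zero_mul, zero_mul, zero_add, zero_add] at hsplit
      exact hsplit.symm
    · -- second piece
      have step_a : ∑ x : τt N, μ 0 x.val * ψ' x = lamF p0 (μ 0) g := by
        rw [hψ'val, hA0eq]
        rfl
      have step_b : lamF p0 (μ 0) g
          = ∑ z : Fin N × Fin N × Finset (Fin N), (π z.1 * c z.2.1 z.1 z.2.2) *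
              (etaStar p0 (μ 0) π (insert z.1 z.2.2)
                - etaStar p0 (μ 0) π (insert z.2.1 z.2.2)) := by
        have hgfun : g = fun x => ∑ z : Fin N × Fin N × Finset (Fin N),
            (π z.1 * c z.2.1 z.1 z.2.2) *
            ((fun w => (hatx π w - prodI w (insert z.1 z.2.2))
              - (hatx π w - prodI w (insert z.2.1 z.2.2))) x) := funext hgdecomp
        rw [hgfun, lamF_comb]
        apply Finset.sum_congr rfl
        intro z _
        congr 1
        rw [lamF_sub]
        rfl
      have step_d : ∑ z : Fin N × Fin N × Finset (Fin N), (π z.1 * c z.2.1 z.1 z.2.2) *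
              (etaStar p0 (μ 0) π (insert z.1 z.2.2)
                - etaStar p0 (μ 0) π (insert z.2.1 z.2.2))
          = ∑ i, π i * ∑ j,
            ∑ I ∈ Finset.univ.filter (fun I : Finset (Fin N) => I.card ≤ Dij c j i),
              c j i I * (η (insert i I) - η (insert j I)) := by
        rw [Fintype.sum_prod_type]
        apply Finset.sum_congr rfl
        intro i _
        rw [Fintype.sum_prod_type, Finset.mul_sum]
        apply Finset.sum_congr rfl
        intro j _
        -- fix i j
        have hfilter : ∑ I ∈ Finset.univ.filter
            (fun I : Finset (Fin N) => I.card ≤ Dij c j i),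
            c j i I * (etaStar p0 (μ 0) π (insert i I) - etaStar p0 (μ 0) π (insert j I))
            = ∑ I : Finset (Fin N),
            c j i I * (etaStar p0 (μ 0) π (insert i I) - etaStar p0 (μ 0) π (insert j I)) := by
          apply Finset.sum_filter_of_ne
          intro I _ hne
          have hc0 : c j i I ≠ 0 := left_ne_zero_of_mul hne
          exact Finset.le_sup (f := Finset.card)
            (Finset.mem_filter.2 ⟨Finset.mem_univ I, hc0⟩)
        have hDD : Dij c j i ≤ Dmax c :=
          Finset.le_sup (f := fun ij : Fin N × Fin N => Dij c ij.1 ij.2)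
            (Finset.mem_univ (j, i))
        have hsubst : ∀ I ∈ Finset.univ.filter
            (fun I : Finset (Fin N) => I.card ≤ Dij c j i),
            c j i I * (etaStar p0 (μ 0) π (insert i I) - etaStar p0 (μ 0) π (insert j I))
            = c j i I * (η (insert i I) - η (insert j I)) := by
          intro I hI
          have hcard : I.card ≤ Dij c j i := (Finset.mem_filter.1 hI).2
          have hins : ∀ k : Fin N, η (insert k I) = etaStar p0 (μ 0) π (insert k I) := by
            intro k
            apply huniq
            · exact Finset.card_pos.2 (Finset.insert_nonempty k I)
            · calc (insert k I).card ≤ I.card + 1 := Finset.card_insert_le k I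
                _ ≤ Dij c j i + 1 := by omega
                _ ≤ Dmax c + 1 := by omega
          rw [hins i, hins j]
        calc ∑ I : Finset (Fin N), π i * c j i I *
              (etaStar p0 (μ 0) π (insert i I) - etaStar p0 (μ 0) π (insert j I))
            = π i * ∑ I : Finset (Fin N), c j i I *
              (etaStar p0 (μ 0) π (insert i I) - etaStar p0 (μ 0) π (insert j I)) := by
              rw [Finset.mul_sum]
              apply Finset.sum_congr rfl
              intro I _
              ring
          _ = π i * ∑ I ∈ Finset.univ.filter
              (fun I : Finset (Fin N) => I.card ≤ Dij c j i),
              c j i I * (etaStar p0 (μ 0) π (insert i I)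
                - etaStar p0 (μ 0) π (insert j I)) := by rw [hfilter]
          _ = π i * ∑ I ∈ Finset.univ.filter
              (fun I : Finset (Fin N) => I.card ≤ Dij c j i),
              c j i I * (η (insert i I) - η (insert j I)) := by
              rw [Finset.sum_congr rfl hsubst]
      rw [step_a, step_b, step_d]
  rw [← hval]
  exact hFd

end Evo
end

section
/- The set-valued coalescent Markov chain 𝒞, whose state space is the nonempty subsets of {1,…,N} and which transitions from I to α̃(I) with probability p°_{(R,α)}, has (under the Fixation Axiom) a single closed communicating class consisting only of singleton subsets, and a unique stationary distribution concentrated on singletons, in which the stationary probability of {i} equals the reproductive value π_i. -/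
/-!
The events `ev₁, …, evₘ` of the Fixation Axiom, applied in turn, send every nonempty set to the
same singleton `{i}`, so every row of the `m`-step matrix of `𝒞` gives `{i}` mass at least
`δ = ∏ₖ p°(evₖ) > 0` (Doeblin's condition). Hence every state leads to `{i}`, and the states
reachable from `{i}` form the only closed communicating class; as `α̃` maps singletons to
singletons, they are all singletons. Doeblin's condition also shrinks the `ℓ¹` norm of a signed
left fixed vector of total mass `0` by the factor `1 - δ`, so a left fixed vector is determined by
its total mass. A stationary distribution exists (normalise `|v|` for a nonzero `v` with
`v P = v`, which exists since `P - 1` kills the constant vector); the above makes it unique and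
identifies it with the vector putting mass `π i` on `{i}`, because the equations defining
reproductive values say exactly that this vector is fixed by `𝒞`.
-/

open Finset Filter Asymptotics Topology

namespace Evo

/-- Nonempty subsets of `{1,…,N}`: the states of the coalescent chain `𝒞`. -/
abbrev NES (N : ℕ) := {I : Finset (Fin N) // I.Nonempty}

/-- Transition matrix of the coalescent chain `𝒞`: from `I`, transition to `α̃(I)` with
probability `p°_{(R,α)}`. -/
def cmat {N : ℕ} (p0 : Event N → ℝ) : Matrix (NES N) (NES N) ℝ :=
  Matrix.of fun I J => ∑ e : Event N, if I.val.image (extMap e) = J.val then p0 e else 0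

/-- Accessibility in the coalescent chain. -/
def leadsTo {N : ℕ} (p0 : Event N → ℝ) : NES N → NES N → Prop :=
  Relation.ReflTransGen fun I J => 0 < cmat p0 I J

/-- A closed communicating class of the coalescent chain: a nonempty set of states that is
closed under positive-probability transitions and in which every state leads to every
other. -/
def IsCCC {N : ℕ} (p0 : Event N → ℝ) (S : Set (NES N)) : Prop :=
  S.Nonempty ∧ (∀ I ∈ S, ∀ J, 0 < cmat p0 I J → J ∈ S) ∧
  ∀ I ∈ S, ∀ J ∈ S, leadsTo p0 I J

/-- A stationary distribution of the coalescent chain. -/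
def IsStatC {N : ℕ} (p0 : Event N → ℝ) (q : NES N → ℝ) : Prop :=
  (∀ I, 0 ≤ q I) ∧ (∑ I : NES N, q I = 1) ∧ ∀ J, ∑ I : NES N, q I * cmat p0 I J = q J

end Evo

namespace Matrix

variable {S : Type*} [Fintype S] [DecidableEq S] {A : Matrix S S ℝ}

theorem vecMul_pow_eq_self {v : S → ℝ} (hv : v ᵥ* A = v) (t : ℕ) : v ᵥ* A ^ t = v := by
  induction t with
  | zero => simp
  | succ t ih => rw [pow_succ, ← vecMul_vecMul, ih, hv]

theorem sum_abs_vecMul_le (hA : A ∈ rowStochastic ℝ S) {c : S} {δ : ℝ} (hδ : ∀ i, δ ≤ A i c)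
    {v : S → ℝ} (hv : ∑ i, v i = 0) :
    ∑ j, |(v ᵥ* A) j| ≤ (1 - δ) * ∑ i, |v i| := by
  -- Since `∑ v = 0`, the mass `δ` that every row sends to `c` can be removed from `A`.
  set B : Matrix S S ℝ := fun i j => A i j - if j = c then δ else 0
  have hB : ∀ i j, 0 ≤ B i j := fun i j => by
    by_cases h : j = c
    · simpa [B, h] using hδ i
    · simpa [B, h] using nonneg_of_mem_rowStochastic hA
  have hvB : v ᵥ* A = v ᵥ* B := by
    ext j
    simp [B, vecMul, dotProduct, mul_sub, sum_sub_distrib, ← sum_mul, hv]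
  calc ∑ j, |(v ᵥ* A) j| ≤ ∑ j, ∑ i, |v i| * B i j := by
        rw [hvB]
        refine sum_le_sum fun j _ => (abs_sum_le_sum_abs _ _).trans_eq ?_
        simp [abs_mul, abs_of_nonneg (hB _ _)]
    _ = (1 - δ) * ∑ i, |v i| := by
        rw [sum_comm, mul_sum]
        refine sum_congr rfl fun i _ => ?_
        simp [B, ← mul_sum, sum_sub_distrib, sum_row_of_mem_rowStochastic hA, mul_comm]

theorem eq_zero_of_vecMul_eq_self (hA : A ∈ rowStochastic ℝ S) {m : ℕ} {c : S} {δ : ℝ}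
    (hδ : 0 < δ) (hmin : ∀ i, δ ≤ (A ^ m) i c) {v : S → ℝ} (hvA : v ᵥ* A = v)
    (hv : ∑ i, v i = 0) : v = 0 := by
  have hcontr := sum_abs_vecMul_le (pow_mem hA m) hmin hv
  rw [vecMul_pow_eq_self hvA] at hcontr
  have hzero : ∑ i, |v i| = 0 :=
    le_antisymm (by nlinarith) (sum_nonneg fun i _ => abs_nonneg _)
  ext i
  simpa using (sum_eq_zero_iff_of_nonneg fun i _ => abs_nonneg (v i)).1 hzero i (mem_univ i)

theorem eq_of_vecMul_eq_self (hA : A ∈ rowStochastic ℝ S) {m : ℕ} {c : S} {δ : ℝ}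
    (hδ : 0 < δ) (hmin : ∀ i, δ ≤ (A ^ m) i c) {v w : S → ℝ} (hv : v ᵥ* A = v)
    (hw : w ᵥ* A = w) (hsum : ∑ i, v i = ∑ i, w i) : v = w :=
  sub_eq_zero.1 <| eq_zero_of_vecMul_eq_self hA hδ hmin (by rw [sub_vecMul, hv, hw])
    (by simp [sum_sub_distrib, hsum])

theorem abs_vecMul_eq_self (hA : A ∈ rowStochastic ℝ S) {v : S → ℝ} (hv : v ᵥ* A = v) :
    (fun i => |v i|) ᵥ* A = fun i => |v i| := by
  have hle : ∀ j, |v j| ≤ ((fun i => |v i|) ᵥ* A) j := fun j => by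
    conv_lhs => rw [← hv]
    refine (abs_sum_le_sum_abs _ _).trans_eq ?_
    simp [vecMul, dotProduct, abs_mul, abs_of_nonneg (nonneg_of_mem_rowStochastic hA)]
  have hsum : ∑ j, ((fun i => |v i|) ᵥ* A) j = ∑ j, |v j| := by
    simp [vecMul, dotProduct, sum_comm (γ := S), ← mul_sum, sum_row_of_mem_rowStochastic hA]
  ext j
  exact ((sum_eq_sum_iff_of_le fun j _ => hle j).1 hsum.symm j (mem_univ j)).symm

theorem exists_stationary_of_mem_rowStochastic [Nonempty S] (hA : A ∈ rowStochastic ℝ S) :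
    ∃ q : S → ℝ, (∀ i, 0 ≤ q i) ∧ ∑ i, q i = 1 ∧ q ᵥ* A = q := by
  have hdet : (A - 1).det = 0 :=
    exists_mulVec_eq_zero_iff.1 ⟨1, one_ne_zero, by
      rw [sub_mulVec, one_vecMul_of_mem_rowStochastic hA, one_mulVec, sub_self]⟩
  obtain ⟨v, hv0, hv⟩ := exists_vecMul_eq_zero_iff.2 hdet
  rw [vecMul_sub, vecMul_one, sub_eq_zero] at hv
  have hpos : 0 < ∑ i, |v i| := by
    obtain ⟨i, hi⟩ := Function.ne_iff.1 hv0
    exact (abs_pos.2 hi).trans_le (single_le_sum (fun j _ => abs_nonneg (v j)) (mem_univ i))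
  refine ⟨(∑ j, |v j|)⁻¹ • fun i => |v i|, fun i => ?_, ?_, ?_⟩
  · simp only [Pi.smul_apply, smul_eq_mul]
    positivity
  · simp [← mul_sum, inv_mul_cancel₀ hpos.ne']
  · rw [smul_vecMul, abs_vecMul_eq_self hA hv]

theorem reflTransGen_of_pow_apply_pos (hA : A ∈ rowStochastic ℝ S) {t : ℕ} {i j : S}
    (h : 0 < (A ^ t) i j) : Relation.ReflTransGen (fun i j => 0 < A i j) i j := by
  induction t generalizing j with
  | zero =>
    obtain rfl : i = j := by by_contra hij; simp [one_apply_ne hij] at h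
    exact .refl
  | succ t ih =>
    rw [pow_succ, mul_apply] at h
    obtain ⟨k, -, hk⟩ := exists_lt_of_sum_lt (sum_const_zero.trans_lt h)
    exact (ih (pos_of_mul_pos_left hk (nonneg_of_mem_rowStochastic hA))).tail
      (pos_of_mul_pos_right hk (nonneg_of_mem_rowStochastic (pow_mem hA t)))

theorem prod_le_pow_apply_foldr (hA : A ∈ rowStochastic ℝ S) {ι : Type*} (w : ι → ℝ)
    (f : ι → S → S) (hw0 : ∀ k, 0 ≤ w k) (hw : ∀ k i, w k ≤ A i (f k i)) (l : List ι) (i : S) :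
    (l.map w).prod ≤ (A ^ l.length) i ((l.map f).foldr (· ∘ ·) id i) := by
  induction l with
  | nil => simp
  | cons k l ih =>
    set F := (l.map f).foldr (· ∘ ·) id
    have hnonneg : ∀ a b, 0 ≤ (A ^ l.length) a b :=
      fun _ _ => nonneg_of_mem_rowStochastic (pow_mem hA _)
    calc ((k :: l).map w).prod = (l.map w).prod * w k := by simp [mul_comm]
      _ ≤ (A ^ l.length) i (F i) * A (F i) (f k (F i)) :=
          mul_le_mul ih (hw k _) (hw0 k) (hnonneg _ _)
      _ ≤ ∑ K, (A ^ l.length) i K * A K (f k (F i)) :=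
          single_le_sum (f := fun K => (A ^ l.length) i K * A K (f k (F i)))
            (fun K _ => mul_nonneg (hnonneg _ _) (nonneg_of_mem_rowStochastic hA)) (mem_univ _)
      _ = _ := by simp [pow_succ, mul_apply, F]

end Matrix

namespace Evo

open scoped Matrix

section Coalescent

variable {N : ℕ} {p0 : Event N → ℝ}

def NES.single (i : Fin N) : NES N := ⟨{i}, Finset.singleton_nonempty i⟩

def NES.image (f : Fin N → Fin N) (I : NES N) : NES N := ⟨I.val.image f, I.prop.image f⟩

theorem NES.single_injective : Function.Injective (NES.single : Fin N → NES N) :=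
  fun _ _ h => Finset.singleton_injective (congrArg Subtype.val h)

theorem NES.card_eq_one_iff {I : NES N} : I.val.card = 1 ↔ ∃ i, I = NES.single i := by
  simp [Finset.card_eq_one, NES.single, Subtype.ext_iff]

@[simp]
theorem NES.image_single (f : Fin N → Fin N) (i : Fin N) :
    NES.image f (NES.single i) = NES.single (f i) :=
  Subtype.ext (Finset.image_singleton f i)

theorem NES.foldr_comp_image (fs : List (Fin N → Fin N)) (I : NES N) :
    (fs.map NES.image).foldr (· ∘ ·) id I = NES.image (fs.foldr (· ∘ ·) id) I := by
  induction fs with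
  | nil => exact Subtype.ext (Finset.image_id.symm)
  | cons f fs ih => exact Subtype.ext (by simp [ih, NES.image, Finset.image_image])

theorem cmat_apply (I J : NES N) :
    cmat p0 I J = ∑ e : Event N, if NES.image (extMap e) I = J then p0 e else 0 := by
  simp [cmat, NES.image, Subtype.ext_iff]

theorem cmat_mem_rowStochastic (hp0 : IsDist p0) : cmat p0 ∈ Matrix.rowStochastic ℝ (NES N) := by
  refine Matrix.mem_rowStochastic_iff_sum.2 ⟨fun I J => ?_, fun I => ?_⟩
  · rw [cmat_apply]
    exact sum_nonneg fun e _ => ite_nonneg (hp0.1 e) le_rfl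
  · simp_rw [cmat_apply]
    rw [sum_comm]
    simpa using hp0.2

theorem le_cmat_image (hp0 : IsDist p0) (e : Event N) (I : NES N) :
    p0 e ≤ cmat p0 I (NES.image (extMap e) I) := by
  rw [cmat_apply]
  have hle := single_le_sum (f := fun e' =>
    if NES.image (extMap e') I = NES.image (extMap e) I then p0 e' else 0)
    (fun e' _ => ite_nonneg (hp0.1 e') le_rfl) (mem_univ e)
  rwa [if_pos rfl] at hle

theorem exists_le_pow_cmat_single (hp0 : IsDist p0) (hfix : FixAxiom fun _ : St N => p0) :
    ∃ (i : Fin N) (m : ℕ), ∃ δ > 0, ∀ I, δ ≤ (cmat p0 ^ m) I (NES.single i) := by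
  obtain ⟨i, m, ev, -, hpos, -, hcomp⟩ := hfix
  refine ⟨i, m, ((List.ofFn ev).map p0).prod, ?_, fun I => ?_⟩
  · refine List.prod_pos fun x hx => ?_
    obtain ⟨e, he, rfl⟩ := List.mem_map.1 hx
    obtain ⟨k, rfl⟩ := List.mem_ofFn.1 he
    exact hpos k (stA N)
  · have := Matrix.prod_le_pow_apply_foldr (cmat_mem_rowStochastic hp0) p0
      (fun e => NES.image (extMap e)) hp0.1 (le_cmat_image hp0) (List.ofFn ev) I
    have hmap : (List.ofFn ev).map (fun e => NES.image (extMap e))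
        = (List.ofFn fun k => extMap (ev k)).map NES.image := by
      simp [List.map_ofFn, Function.comp_def]
    rwa [List.length_ofFn, hmap, NES.foldr_comp_image, funext hcomp,
      show NES.image (fun _ => i) I = NES.single i from
        Subtype.ext (Finset.image_const I.prop i)] at this

theorem card_eq_one_of_leadsTo {I J : NES N} (h : leadsTo p0 I J) (hI : I.val.card = 1) :
    J.val.card = 1 := by
  induction h with
  | refl => exact hI
  | tail _ hstep ih =>
    obtain ⟨i, rfl⟩ := NES.card_eq_one_iff.1 ih
    rw [cmat_apply] at hstep
    obtain ⟨e, -, he⟩ := exists_ne_zero_of_sum_ne_zero hstep.ne'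
    rw [← (ite_ne_right_iff.1 he).1, NES.image_single]
    simp [NES.single]

theorem mem_of_leadsTo {S : Set (NES N)} (hS : ∀ I ∈ S, ∀ J, 0 < cmat p0 I J → J ∈ S)
    {I J : NES N} (h : leadsTo p0 I J) (hI : I ∈ S) : J ∈ S := by
  induction h with
  | refl => exact hI
  | tail _ hstep ih => exact hS _ ih _ hstep

theorem isCCC_iff_eq_setOf_leadsTo {c : NES N} (hc : ∀ I, leadsTo p0 I c) (S : Set (NES N)) :
    IsCCC p0 S ↔ S = {J | leadsTo p0 c J} := by
  constructor
  · rintro ⟨⟨I, hI⟩, hclosed, hcomm⟩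
    have hcS : c ∈ S := mem_of_leadsTo hclosed (hc I) hI
    ext J
    exact ⟨hcomm c hcS J, fun hJ => mem_of_leadsTo hclosed hJ hcS⟩
  · rintro rfl
    exact ⟨⟨c, .refl⟩, fun I hI J hIJ => hI.tail hIJ, fun I _ J hJ => (hc I).trans hJ⟩

theorem cmat_single_single (i j : Fin N) :
    cmat p0 (NES.single i) (NES.single j) =
      emarg p0 j i + if i = j then ∑ e : Event N, (if i ∉ e.1 then p0 e else 0) else 0 := by
  rw [cmat_apply, emarg]
  simp only [NES.image_single, NES.single_injective.eq_iff]
  split_ifs with hij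
  · subst hij
    rw [← sum_add_distrib]
    refine sum_congr rfl fun e _ => ?_
    by_cases h : i ∈ e.1 <;> simp [extMap, h]
  · rw [add_zero]
    refine sum_congr rfl fun e _ => ?_
    by_cases h : i ∈ e.1 <;> simp [extMap, h, hij]

theorem cmat_single_of_card_ne_one (hp0 : IsDist p0) (i : Fin N) {J : NES N}
    (hJ : J.val.card ≠ 1) : cmat p0 (NES.single i) J = 0 :=
  le_antisymm (not_lt.1 fun h => hJ (card_eq_one_of_leadsTo (.single h) (card_singleton i)))
    (Matrix.nonneg_of_mem_rowStochastic (cmat_mem_rowStochastic hp0))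

theorem sum_emarg_left (i : Fin N) :
    ∑ k, emarg p0 k i = ∑ e : Event N, if i ∈ e.1 then p0 e else 0 := by
  simp only [emarg]
  rw [sum_comm]
  refine sum_congr rfl fun e _ => ?_
  by_cases h : i ∈ e.1 <;> simp [h]

def singleVec (π : Fin N → ℝ) : NES N → ℝ := ∑ i, Pi.single (NES.single i) (π i)

theorem singleVec_single (π : Fin N → ℝ) (j : Fin N) : singleVec π (NES.single j) = π j := by
  simp [singleVec, Pi.single_apply, NES.single_injective.eq_iff]

theorem singleVec_of_card_ne_one (π : Fin N → ℝ) {I : NES N} (hI : I.val.card ≠ 1) :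
    singleVec π I = 0 := by
  simp only [singleVec, Finset.sum_apply, Pi.single_apply]
  exact sum_eq_zero fun i _ => if_neg fun h => hI (NES.card_eq_one_iff.2 ⟨i, h⟩)

theorem sum_singleVec (π : Fin N → ℝ) : ∑ I, singleVec π I = ∑ i, π i := by
  simp only [singleVec, Finset.sum_apply]
  rw [sum_comm]
  simp

theorem singleVec_vecMul_cmat (hp0 : IsDist p0) {π : Fin N → ℝ} (hπ : IsRV p0 π) :
    singleVec π ᵥ* cmat p0 = singleVec π := by
  ext J
  rw [singleVec, Matrix.sum_vecMul, ← singleVec]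
  simp only [Matrix.single_vecMul, Finset.sum_apply, Pi.smul_apply, Matrix.row_apply, smul_eq_mul]
  by_cases hJ : J.val.card = 1
  · obtain ⟨j, rfl⟩ := NES.card_eq_one_iff.1 hJ
    simp only [cmat_single_single, mul_add, sum_add_distrib, mul_ite, mul_zero, sum_ite_eq',
      mem_univ, if_true, singleVec_single]
    have hrv : ∑ i, π i * emarg p0 j i = π j * ∑ k, emarg p0 k j := by
      rw [mul_sum]
      convert hπ.1 j using 2 <;> ring
    have htotal : ∀ e : Event N, ((if j ∈ e.1 then p0 e else 0) + if j ∉ e.1 then p0 e else 0)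
        = p0 e := fun e => by by_cases h : j ∈ e.1 <;> simp [h]
    rw [hrv, sum_emarg_left, ← mul_add, ← sum_add_distrib]
    simp only [htotal, hp0.2, mul_one]
  · simp [cmat_single_of_card_ne_one hp0 _ hJ, singleVec_of_card_ne_one π hJ]

end Coalescent

/-- under the Fixation Axiom, the coalescent chain `𝒞` has a single closed
communicating class consisting only of singletons, and a unique stationary distribution,
which is concentrated on singletons with `q({i}) = π_i`. -/
theorem statement9 {N : ℕ} (p0 : Event N → ℝ) (hp0 : IsDist p0)
    (hfix : FixAxiom fun _ : St N => p0)
    (π : Fin N → ℝ) (hπ : IsRV p0 π) :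
    (∃! S : Set (NES N), IsCCC p0 S) ∧
    (∀ S : Set (NES N), IsCCC p0 S → ∀ I ∈ S, I.val.card = 1) ∧
    (∃! q : NES N → ℝ, IsStatC p0 q) ∧
    (∀ q : NES N → ℝ, IsStatC p0 q →
      (∀ I : NES N, I.val.card ≠ 1 → q I = 0) ∧
      ∀ i : Fin N, q ⟨{i}, Finset.singleton_nonempty i⟩ = π i) := by
  have hA := cmat_mem_rowStochastic hp0
  obtain ⟨i₀, m, δ, hδ, hmin⟩ := exists_le_pow_cmat_single hp0 hfix
  have hreach (I : NES N) : leadsTo p0 I (NES.single i₀) :=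
    Matrix.reflTransGen_of_pow_apply_pos hA (hδ.trans_le (hmin I))
  have hCCC := isCCC_iff_eq_setOf_leadsTo hreach
  have hstat (q : NES N → ℝ) (hq : IsStatC p0 q) : q = singleVec π :=
    Matrix.eq_of_vecMul_eq_self hA hδ hmin (funext hq.2.2) (singleVec_vecMul_cmat hp0 hπ)
      (by rw [hq.2.1, sum_singleVec, hπ.2])
  have : Nonempty (NES N) := ⟨NES.single i₀⟩
  obtain ⟨q₀, hq₀⟩ := Matrix.exists_stationary_of_mem_rowStochastic hA
  have hq₀ : IsStatC p0 q₀ := ⟨hq₀.1, hq₀.2.1, congrFun hq₀.2.2⟩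
  refine ⟨⟨_, (hCCC _).2 rfl, fun S hS => (hCCC S).1 hS⟩, ?_,
    ⟨q₀, hq₀, fun q hq => (hstat q hq).trans (hstat q₀ hq₀).symm⟩, fun q hq => ?_⟩
  · rintro S hS I hI
    rw [(hCCC S).1 hS] at hI
    exact card_eq_one_of_leadsTo hI (card_singleton i₀)
  · rw [hstat q hq]
    exact ⟨fun I hI => singleVec_of_card_ne_one π hI, singleVec_single π⟩

end Evo
end

section
/- Under uniform initialization (the mutant-appearance distribution μ_A with μ_A(𝟏_{{i}}) = 1/N for each i, where 𝟏_{{i}} is the state with a single A at site i), the unique solution of the system η^{μ_A}_I = E°_{μ_A}[ξ̂ − ξ_I] + Σ_{(R,α)} p°_{(R,α)} η^{μ_A}_{α̃(I)} (for 1 ≤ |I| ≤ D+1) with Σ_i π_i η^{μ_A}_{{i}} = 0 satisfies: η^{μ_A}_{{i}} = 0 for every singleton {i}, and for every I with |I| ≥ 2, η^{μ_A}_I equals (1/N) times the expected number of steps for the coalescent chain 𝒞 to reach a singleton set when started from I. -/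
/-!
Both parts rest on one maximum principle. Call `d` harmonic on a family `S` of nonempty sets
closed under the coalescent if `d I = Σ p°(R,α) d(α̃(I))` for `I ∈ S`. Along events of positive
probability, the maximizers of `d` on `S` are carried to maximizers, and the Fixation Axiom
provides such a path funnelling every nonempty set into one singleton `{i₀}`; so `max d` and
`min d` are both attained at `{i₀}` and `d` is constant on `S`.

Under uniform initialization the forcing term vanishes on singletons and equals `1/N` on sets
with at least two elements. Hence `η` is harmonic on singletons, and the normalization
`Σ π_i η_{{i}} = 0` makes it vanish there. The coalescence time satisfies
`T(I) = [|I| ≥ 2] + Σ p° T(α̃(I))`, so `η - T/N` is harmonic on `1 ≤ |I| ≤ D + 1` and vanishes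
at singletons. `T` is finite because each block of `m` steps coalesces with probability at least
`Π_k p°(ev_k) > 0`, where `ev` is the Fixation Axiom's event sequence, so `P[|𝒞_t| ≥ 2]` decays
geometrically.
-/

open Finset Filter Asymptotics Topology

namespace Evo

/-- Transition matrix of the coalescent chain on all subsets of `{1,…,N}`. -/
def cmatAll {N : ℕ} (p0 : Event N → ℝ) : Matrix (Finset (Fin N)) (Finset (Fin N)) ℝ :=
  Matrix.of fun I J => ∑ e : Event N, if I.image (extMap e) = J then p0 e else 0

/-- The expected number of steps for the coalescent chain to reach a singleton set when
started from `I` (expressed as `Σ_t P[|𝒞_t| ≥ 2]`). -/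
noncomputable def coalTime {N : ℕ} (p0 : Event N → ℝ) (I : Finset (Fin N)) : ℝ :=
  ∑' t : ℕ, ∑ J ∈ Finset.univ.filter (fun J : Finset (Fin N) => 2 ≤ J.card),
    (cmatAll p0 ^ t) I J

/-- The state `𝟏_{{v}}` with a single `A` at site `v`. -/
def oneAt {N : ℕ} (v : Fin N) : St N := fun i => if i = v then true else false

lemma eq_of_weighted_sum_eq_of_le {ι : Type*} [Fintype ι] {w f : ι → ℝ} {c : ℝ}
    (hw : ∀ i, 0 ≤ w i) (hw1 : ∑ i, w i = 1) (hf : ∀ i, f i ≤ c) (havg : ∑ i, w i * f i = c)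
    {i : ι} (hi : 0 < w i) : f i = c := by
  have hsum : ∑ i, w i * f i = ∑ i, w i * c := by rw [← Finset.sum_mul, hw1, one_mul, havg]
  exact mul_left_cancel₀ hi.ne' <|
    (Finset.sum_eq_sum_iff_of_le fun i _ => mul_le_mul_of_nonneg_left (hf i) (hw i)).1
      hsum i (Finset.mem_univ i)

lemma summable_pow_div {r : ℝ} (hr0 : 0 ≤ r) (hr1 : r < 1) {m : ℕ} (hm : 0 < m) :
    Summable fun t : ℕ => r ^ (t / m) := by
  have : NeZero m := ⟨hm.ne'⟩
  rw [← (Nat.divModEquiv m).symm.summable_iff]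
  have h := (summable_geometric_of_lt_one hr0 hr1).mul_of_nonneg
    (Summable.of_finite (f := fun _ : Fin m => (1 : ℝ)))
    (fun k => pow_nonneg hr0 k) fun _ => zero_le_one
  convert h using 2 with p
  rw [Function.comp_apply, Nat.divModEquiv_symm_apply, Nat.add_comm,
    Nat.add_mul_div_right _ _ hm, Nat.div_eq_of_lt p.2.is_lt, zero_add, mul_one]

section Coalescent

variable {N : ℕ} {p0 : Event N → ℝ}

lemma sum_cmatAll_mul (f : Finset (Fin N) → ℝ) (I : Finset (Fin N)) :
    ∑ J, cmatAll p0 I J * f J = ∑ e, p0 e * f (I.image (extMap e)) := by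
  simp only [cmatAll, Matrix.of_apply, Finset.sum_mul, ite_mul, zero_mul]
  rw [Finset.sum_comm]
  simp

lemma cmatAll_mem_rowStochastic (hp0 : IsDist p0) :
    cmatAll p0 ∈ Matrix.rowStochastic ℝ (Finset (Fin N)) := by
  refine Matrix.mem_rowStochastic_iff_sum.2 ⟨fun I J => ?_, fun I => ?_⟩
  · exact Finset.sum_nonneg fun e _ => ite_nonneg (hp0.1 e) le_rfl
  · simpa [hp0.2] using sum_cmatAll_mul (p0 := p0) (fun _ => 1) I

lemma le_cmatAll (hp0 : IsDist p0) (e : Event N) (I : Finset (Fin N)) :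
    p0 e ≤ cmatAll p0 I (I.image (extMap e)) := by
  simpa [cmatAll] using Finset.single_le_sum
    (f := fun e' => if I.image (extMap e') = I.image (extMap e) then p0 e' else 0)
    (fun e' _ => ite_nonneg (hp0.1 e') le_rfl) (Finset.mem_univ e)

/-- The coalescent started at `I` after the events of `L`, the last one first. -/
def imageEvents (L : List (Event N)) (I : Finset (Fin N)) : Finset (Fin N) :=
  L.foldr (fun e J => J.image (extMap e)) I

lemma imageEvents_eq_image (L : List (Event N)) (I : Finset (Fin N)) :
    imageEvents L I = I.image ((L.map extMap).foldr (· ∘ ·) id) := by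
  induction L with
  | nil => simp [imageEvents]
  | cons e L ih => simp_all [imageEvents, Finset.image_image]

lemma exists_coalescing_path (hfix : FixAxiom fun _ : St N => p0) :
    ∃ (i₀ : Fin N) (L : List (Event N)), 0 < L.length ∧ (∀ e ∈ L, 0 < p0 e) ∧
      ∀ I, imageEvents L I ⊆ {i₀} := by
  obtain ⟨i₀, m, ev, hm, hpos, -, hcomp⟩ := hfix
  refine ⟨i₀, List.ofFn ev, by simp; omega, ?_, fun I => ?_⟩
  · simpa [List.mem_ofFn] using fun k => hpos k (stA N)
  · rw [imageEvents_eq_image, List.map_ofFn]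
    intro j hj
    obtain ⟨k, -, rfl⟩ := Finset.mem_image.1 hj
    exact Finset.mem_singleton.2 (hcomp k)

lemma prod_le_cmatAll_pow_imageEvents (hp0 : IsDist p0) (L : List (Event N))
    (I : Finset (Fin N)) :
    (L.map p0).prod ≤ (cmatAll p0 ^ L.length) I (imageEvents L I) := by
  have hP := cmatAll_mem_rowStochastic hp0
  induction L with
  | nil => simp [imageEvents]
  | cons e L ih =>
    set K := imageEvents L I
    calc ((e :: L).map p0).prod = (L.map p0).prod * p0 e := by simp [mul_comm]
      _ ≤ (cmatAll p0 ^ L.length) I K * cmatAll p0 K (K.image (extMap e)) :=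
        mul_le_mul ih (le_cmatAll hp0 e K) (hp0.1 e)
          (Matrix.nonneg_of_mem_rowStochastic (pow_mem hP _))
      _ ≤ (cmatAll p0 ^ (L.length + 1)) I (K.image (extMap e)) := by
        rw [pow_succ, Matrix.mul_apply]
        exact Finset.single_le_sum
          (f := fun J => (cmatAll p0 ^ L.length) I J * cmatAll p0 J (K.image (extMap e)))
          (fun J _ => mul_nonneg (Matrix.nonneg_of_mem_rowStochastic (pow_mem hP _))
            (Matrix.nonneg_of_mem_rowStochastic hP)) (Finset.mem_univ K)

noncomputable def notCoalescedProb (p0 : Event N → ℝ) (t : ℕ) (I : Finset (Fin N)) : ℝ :=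
  ∑ J ∈ Finset.univ.filter (fun J : Finset (Fin N) => 2 ≤ J.card), (cmatAll p0 ^ t) I J

lemma coalTime_eq_tsum (I : Finset (Fin N)) :
    coalTime p0 I = ∑' t, notCoalescedProb p0 t I := rfl

lemma notCoalescedProb_zero (I : Finset (Fin N)) :
    notCoalescedProb p0 0 I = if 2 ≤ I.card then 1 else 0 := by
  simp [notCoalescedProb, Matrix.one_apply]

lemma notCoalescedProb_add (s t : ℕ) (I : Finset (Fin N)) :
    notCoalescedProb p0 (s + t) I =
      ∑ K, (cmatAll p0 ^ s) I K * notCoalescedProb p0 t K := by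
  simp only [notCoalescedProb, pow_add, Matrix.mul_apply, Finset.mul_sum]
  exact Finset.sum_comm

lemma notCoalescedProb_succ (t : ℕ) (I : Finset (Fin N)) :
    notCoalescedProb p0 (t + 1) I =
      ∑ e, p0 e * notCoalescedProb p0 t (I.image (extMap e)) := by
  rw [add_comm, notCoalescedProb_add, pow_one, sum_cmatAll_mul]

lemma notCoalescedProb_nonneg (hp0 : IsDist p0) (t : ℕ) (I : Finset (Fin N)) :
    0 ≤ notCoalescedProb p0 t I :=
  Finset.sum_nonneg fun _ _ =>
    Matrix.nonneg_of_mem_rowStochastic (pow_mem (cmatAll_mem_rowStochastic hp0) t)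

lemma notCoalescedProb_le_one (hp0 : IsDist p0) (t : ℕ) (I : Finset (Fin N)) :
    notCoalescedProb p0 t I ≤ 1 := by
  have hP := pow_mem (cmatAll_mem_rowStochastic hp0) t
  rw [← Matrix.sum_row_of_mem_rowStochastic hP I]
  exact Finset.sum_le_sum_of_subset_of_nonneg (Finset.filter_subset _ _)
    fun _ _ _ => Matrix.nonneg_of_mem_rowStochastic hP

lemma notCoalescedProb_eq_zero_of_card_le_one (t : ℕ) {I : Finset (Fin N)}
    (hI : I.card ≤ 1) : notCoalescedProb p0 t I = 0 := by
  induction t generalizing I with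
  | zero => simp [notCoalescedProb_zero, hI]
  | succ t ih =>
    rw [notCoalescedProb_succ]
    exact Finset.sum_eq_zero fun e _ => by rw [ih (Finset.card_image_le.trans hI), mul_zero]

lemma notCoalescedProb_add_le (hp0 : IsDist p0) {s t : ℕ} {c : ℝ}
    (hc : ∀ K, notCoalescedProb p0 t K ≤ c) (I : Finset (Fin N)) :
    notCoalescedProb p0 (s + t) I ≤ notCoalescedProb p0 s I * c := by
  have hle : ∀ K, notCoalescedProb p0 t K ≤ if 2 ≤ K.card then c else 0 := fun K => by
    split_ifs with hK
    · exact hc K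
    · exact (notCoalescedProb_eq_zero_of_card_le_one t (by omega)).le
  calc notCoalescedProb p0 (s + t) I
      ≤ ∑ K, (cmatAll p0 ^ s) I K * if 2 ≤ K.card then c else 0 := by
        rw [notCoalescedProb_add]
        exact Finset.sum_le_sum fun K _ => mul_le_mul_of_nonneg_left (hle K)
          (Matrix.nonneg_of_mem_rowStochastic (pow_mem (cmatAll_mem_rowStochastic hp0) s))
    _ = notCoalescedProb p0 s I * c := by
        simp only [mul_ite, mul_zero, ← Finset.sum_filter, notCoalescedProb, Finset.sum_mul]

lemma notCoalescedProb_length_le (hp0 : IsDist p0) {i₀ : Fin N} {L : List (Event N)}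
    (hL : ∀ I, imageEvents L I ⊆ {i₀}) (I : Finset (Fin N)) :
    notCoalescedProb p0 L.length I ≤ 1 - (L.map p0).prod := by
  have hP := pow_mem (cmatAll_mem_rowStochastic hp0) L.length
  have hsplit := Finset.sum_filter_add_sum_filter_not Finset.univ
    (fun K : Finset (Fin N) => 2 ≤ K.card) fun K => (cmatAll p0 ^ L.length) I K
  rw [Matrix.sum_row_of_mem_rowStochastic hP I] at hsplit
  have hend : imageEvents L I ∈ Finset.univ.filter fun K : Finset (Fin N) => ¬2 ≤ K.card := by
    have := (Finset.card_le_card (hL I)).trans_eq (Finset.card_singleton i₀)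
    simp only [Finset.mem_filter, Finset.mem_univ, true_and]
    omega
  have := (prod_le_cmatAll_pow_imageEvents hp0 L I).trans <| Finset.single_le_sum
    (f := fun K => (cmatAll p0 ^ L.length) I K)
    (fun K _ => Matrix.nonneg_of_mem_rowStochastic hP) hend
  rw [notCoalescedProb]
  linarith

lemma notCoalescedProb_le_pow_div (hp0 : IsDist p0) {m : ℕ} {c : ℝ}
    (hc : ∀ K, notCoalescedProb p0 m K ≤ c) (t : ℕ) (I : Finset (Fin N)) :
    notCoalescedProb p0 t I ≤ c ^ (t / m) := by
  have hc0 : 0 ≤ c := (notCoalescedProb_nonneg hp0 m ∅).trans (hc ∅)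
  suffices h : ∀ k s I, notCoalescedProb p0 (m * k + s) I ≤ c ^ k by
    simpa [Nat.div_add_mod] using h (t / m) (t % m) I
  intro k
  induction k with
  | zero => simpa using notCoalescedProb_le_one hp0
  | succ k ih =>
    intro s I
    calc notCoalescedProb p0 (m * (k + 1) + s) I = notCoalescedProb p0 (m + (m * k + s)) I := by
          ring_nf
      _ ≤ notCoalescedProb p0 m I * c ^ k := notCoalescedProb_add_le hp0 (ih s) I
      _ ≤ c ^ (k + 1) := by rw [pow_succ']; gcongr; exact hc I

lemma summable_notCoalescedProb (hp0 : IsDist p0) (hfix : FixAxiom fun _ : St N => p0)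
    (I : Finset (Fin N)) : Summable fun t => notCoalescedProb p0 t I := by
  obtain ⟨i₀, L, hlen, hpos, hL⟩ := exists_coalescing_path hfix
  have hdecay := notCoalescedProb_length_le hp0 hL
  have hq : 0 < (L.map p0).prod := List.prod_pos fun x hx => by
    obtain ⟨e, he, rfl⟩ := List.mem_map.1 hx
    exact hpos e he
  have hq1 : 0 ≤ 1 - (L.map p0).prod :=
    (notCoalescedProb_nonneg hp0 L.length I).trans (hdecay I)
  exact (summable_pow_div hq1 (by linarith) hlen).of_nonneg_of_le
    (fun t => notCoalescedProb_nonneg hp0 t I) fun t => notCoalescedProb_le_pow_div hp0 hdecay t I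

lemma coalTime_eq_zero_of_card_le_one {I : Finset (Fin N)} (hI : I.card ≤ 1) :
    coalTime p0 I = 0 := by
  simp [coalTime_eq_tsum, notCoalescedProb_eq_zero_of_card_le_one _ hI]

lemma coalTime_eq (hp0 : IsDist p0) (hfix : FixAxiom fun _ : St N => p0)
    (I : Finset (Fin N)) :
    coalTime p0 I = (if 2 ≤ I.card then 1 else 0) +
      ∑ e, p0 e * coalTime p0 (I.image (extMap e)) := by
  have hsum := summable_notCoalescedProb hp0 hfix
  rw [coalTime_eq_tsum, (hsum I).tsum_eq_zero_add, notCoalescedProb_zero]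
  simp only [notCoalescedProb_succ, coalTime_eq_tsum, ← tsum_mul_left]
  rw [Summable.tsum_finsetSum fun e _ => (hsum _).mul_left _]

section Harmonic

variable {S : Set (Finset (Fin N))} {d : Finset (Fin N) → ℝ}

lemma imageEvents_mem_and_eq_of_isMaxOn (hp0 : IsDist p0)
    (hcl : ∀ I ∈ S, ∀ e, I.image (extMap e) ∈ S)
    (hd : ∀ I ∈ S, d I = ∑ e, p0 e * d (I.image (extMap e)))
    {L : List (Event N)} (hpos : ∀ e ∈ L, 0 < p0 e) {J : Finset (Fin N)} (hJ : J ∈ S)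
    (hmax : IsMaxOn d S J) : imageEvents L J ∈ S ∧ d (imageEvents L J) = d J := by
  induction L with
  | nil => exact ⟨hJ, rfl⟩
  | cons e L ih =>
    obtain ⟨hK, hKmax⟩ := ih fun e' he' => hpos e' (List.mem_cons_of_mem e he')
    refine ⟨hcl _ hK e, (eq_of_weighted_sum_eq_of_le hp0.1 hp0.2
      (f := fun e' => d ((imageEvents L J).image (extMap e'))) (fun e' => ?_) ?_
      (hpos e List.mem_cons_self)).trans hKmax⟩
    · exact hKmax ▸ hmax (hcl _ hK e')
    · exact (hd _ hK).symm

lemma le_of_harmonic (hp0 : IsDist p0) (hcl : ∀ I ∈ S, ∀ e, I.image (extMap e) ∈ S)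
    (hd : ∀ I ∈ S, d I = ∑ e, p0 e * d (I.image (extMap e)))
    {i₀ : Fin N} {L : List (Event N)} (hpos : ∀ e ∈ L, 0 < p0 e)
    (hL : ∀ I ∈ S, imageEvents L I = {i₀}) {I : Finset (Fin N)} (hI : I ∈ S) :
    d I ≤ d {i₀} := by
  obtain ⟨J, hJ, hmax⟩ := Set.exists_max_image S d S.toFinite ⟨I, hI⟩
  obtain ⟨-, hLJ⟩ := imageEvents_mem_and_eq_of_isMaxOn hp0 hcl hd hpos hJ fun K hK => hmax K hK
  rw [← hL J hJ, hLJ]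
  exact hmax I hI

lemma eq_of_harmonic (hp0 : IsDist p0) (hfix : FixAxiom fun _ : St N => p0)
    (hne : ∀ I ∈ S, I.Nonempty) (hcl : ∀ I ∈ S, ∀ e, I.image (extMap e) ∈ S)
    (hd : ∀ I ∈ S, d I = ∑ e, p0 e * d (I.image (extMap e)))
    {I J : Finset (Fin N)} (hI : I ∈ S) (hJ : J ∈ S) : d I = d J := by
  obtain ⟨i₀, L, -, hpos, hL⟩ := exists_coalescing_path hfix
  have hL' : ∀ I ∈ S, imageEvents L I = {i₀} := fun I hI =>
    (Finset.Nonempty.subset_singleton_iff (by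
      rw [imageEvents_eq_image]; exact (hne I hI).image _)).1 (hL I)
  have hd' : ∀ I ∈ S, -d I = ∑ e, p0 e * -d (I.image (extMap e)) := fun I hI => by
    simp [hd I hI]
  have hle : ∀ K ∈ S, d K ≤ d {i₀} := fun K hK => le_of_harmonic hp0 hcl hd hpos hL' hK
  have hge : ∀ K ∈ S, -d K ≤ -d {i₀} := fun K hK =>
    le_of_harmonic (d := fun K => -d K) hp0 hcl hd' hpos hL' hK
  linarith [hle I hI, hle J hJ, hge I hI, hge J hJ]

end Harmonic

lemma hatx_oneAt (π : Fin N → ℝ) (v : Fin N) : hatx π (oneAt v) = π v := by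
  simp [hatx, oneAt, bv]

lemma prodI_oneAt (v : Fin N) (I : Finset (Fin N)) :
    prodI (oneAt v) I = if ∀ i ∈ I, i = v then 1 else 0 := by
  simp [prodI, oneAt, bv, Finset.prod_boole]

lemma sum_prodI_oneAt {I : Finset (Fin N)} (hI : I.Nonempty) :
    ∑ v, prodI (oneAt v) I = if 2 ≤ I.card then 0 else 1 := by
  simp only [prodI_oneAt]
  split_ifs with h2
  · refine Finset.sum_eq_zero fun v _ => if_neg fun hv => ?_
    have := (Finset.card_le_card (Finset.subset_singleton_iff'.2 hv)).trans_eq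
      (Finset.card_singleton v)
    omega
  · obtain ⟨w, rfl⟩ : ∃ w, I = {w} := Finset.card_eq_one.1 (by have := hI.card_pos; omega)
    simp

lemma sum_uniform_expectation {π : Fin N → ℝ} (hπ : ∑ i, π i = 1) {I : Finset (Fin N)}
    (hI : I.Nonempty) :
    ∑ v : Fin N, (1 / (N : ℝ)) * (hatx π (oneAt v) - prodI (oneAt v) I) =
      if 2 ≤ I.card then 1 / (N : ℝ) else 0 := by
  rw [← Finset.mul_sum, Finset.sum_sub_distrib, sum_prodI_oneAt hI]
  simp only [hatx_oneAt, hπ]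
  split_ifs <;> ring

namespace EtaSystem

variable {π : Fin N → ℝ} {E : Finset (Fin N) → ℝ} {D : ℕ} {η : Finset (Fin N) → ℝ}

lemma singleton_eq_zero (hη : EtaSystem p0 π E D η) (hp0 : IsDist p0)
    (hfix : FixAxiom fun _ : St N => p0) (hπ : ∑ i, π i = 1) (hE : ∀ i, E {i} = 0) (i : Fin N) :
    η {i} = 0 := by
  have hconst : ∀ j, η {j} = η {i} := fun j => by
    refine eq_of_harmonic (S := {I | I.card = 1}) hp0 hfix
      (fun I (hI : I.card = 1) => Finset.card_pos.1 (by omega)) (fun I (hI : I.card = 1) e => ?_)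
      (fun I (hI : I.card = 1) => ?_) (Finset.card_singleton j) (Finset.card_singleton i)
    all_goals obtain ⟨a, rfl⟩ : ∃ a, I = {a} := Finset.card_eq_one.1 hI
    · simp
    · rw [hη.1 {a} hI.ge (by omega), hE, zero_add]
  rw [← hη.2, ← one_mul (η {i}), ← hπ, Finset.sum_mul]
  exact Finset.sum_congr rfl fun j _ => by rw [hconst j]

lemma eq_mul_coalTime (hη : EtaSystem p0 π E D η) (hp0 : IsDist p0)
    (hfix : FixAxiom fun _ : St N => p0) {c : ℝ}
    (hE : ∀ I : Finset (Fin N), I.Nonempty → E I = if 2 ≤ I.card then c else 0)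
    (hsing : ∀ i, η {i} = 0) {I : Finset (Fin N)} (hI : 2 ≤ I.card) (hID : I.card ≤ D + 1) :
    η I = c * coalTime p0 I := by
  obtain ⟨i, -⟩ := Finset.card_pos.1 (by omega : 0 < I.card)
  have := eq_of_harmonic (S := {J | 1 ≤ J.card ∧ J.card ≤ D + 1})
    (d := fun J => η J - c * coalTime p0 J) hp0 hfix
    (fun J (hJ : 1 ≤ J.card ∧ _) => Finset.card_pos.1 hJ.1)
    (fun J (hJ : 1 ≤ J.card ∧ _) e =>
      ⟨Finset.card_pos.2 ((Finset.card_pos.1 hJ.1).image _), Finset.card_image_le.trans hJ.2⟩)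
    (fun J (hJ : 1 ≤ J.card ∧ _) => by
      rw [hη.1 J hJ.1 hJ.2, hE J (Finset.card_pos.1 hJ.1), coalTime_eq hp0 hfix J]
      simp only [mul_sub, Finset.sum_sub_distrib, mul_add, Finset.mul_sum, mul_left_comm c]
      split_ifs <;> ring)
    (show 1 ≤ I.card ∧ I.card ≤ D + 1 by omega)
    (show 1 ≤ ({i} : Finset (Fin N)).card ∧ _ by simp)
  rwa [hsing, coalTime_eq_zero_of_card_le_one (Finset.card_singleton i).le, mul_zero, sub_zero,
    sub_eq_zero] at this

end EtaSystem

end Coalescent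

theorem statement10_general {N : ℕ} (p0 : Event N → ℝ) (hp0 : IsDist p0)
    (hfix : FixAxiom fun _ : St N => p0)
    (π : Fin N → ℝ) (hπ : IsRV p0 π)
    (D : ℕ)
    (η : Finset (Fin N) → ℝ)
    (hη : EtaSystem p0 π
      (fun I => ∑ v : Fin N, (1 / (N : ℝ)) * (hatx π (oneAt v) - prodI (oneAt v) I)) D η) :
    (∀ i : Fin N, η {i} = 0) ∧
    ∀ I : Finset (Fin N), 2 ≤ I.card → I.card ≤ D + 1 →
      η I = coalTime p0 I / N := by
  have hE := fun (I : Finset (Fin N)) (hI : I.Nonempty) => sum_uniform_expectation hπ.2 hI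
  have hsing := hη.singleton_eq_zero hp0 hfix hπ.2 fun i => by
    simpa using hE {i} (Finset.singleton_nonempty i)
  refine ⟨hsing, fun I hI hID => ?_⟩
  rw [hη.eq_mul_coalTime hp0 hfix hE hsing hI hID, one_div_mul_eq_div]

/-- under uniform initialization, the unique solution of the `η`-system
satisfies `η_{{i}} = 0` for singletons, and `η_I = (coalescence time from I)/N` for all
`I` with `2 ≤ |I| ≤ D+1`. -/
theorem statement10 {N : ℕ} (hN : 0 < N) (p0 : Event N → ℝ) (hp0 : IsDist p0)
    (hfix : FixAxiom fun _ : St N => p0)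
    (π : Fin N → ℝ) (hπ : IsRV p0 π)
    (D : ℕ) (hD : 1 ≤ D)
    (η : Finset (Fin N) → ℝ)
    (hη : EtaSystem p0 π
      (fun I => ∑ v : Fin N, (1 / (N : ℝ)) * (hatx π (oneAt v) - prodI (oneAt v) I)) D η) :
    (∀ i : Fin N, η {i} = 0) ∧
    ∀ I : Finset (Fin N), 2 ≤ I.card → I.card ≤ D + 1 →
      η I = coalTime p0 I / N :=
  statement10_general p0 hp0 hfix π hπ D η hη

end Evo
end

section
/- For the neutral Birth-death process on a connected weighted graph, whose marginal replacement probabilities are e°_ij = p^{(1)}_{ij}/N, the reproductive values are π_i = w_i^{-1} / Σ_{j=1}^N w_j^{-1}; that is, these values satisfy Σ_j e°_ij π_j = Σ_j e°_ji π_i for every i and Σ_i π_i = 1, and they are the unique such solution. In particular they satisfy the relation π_i p^{(1)}_{ji} = π_j p^{(1)}_{ij}. -/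
open Finset Filter Asymptotics Topology

namespace Evo

/-- The weighted degree `w_i = Σ_j w_ij` of vertex `i`. -/
def wdeg {N : ℕ} (w : Fin N → Fin N → ℝ) (i : Fin N) : ℝ := ∑ j, w i j

/-- The one-step random-walk probability `p^{(1)}_{ij} = w_ij / w_i`. -/
noncomputable def p1 {N : ℕ} (w : Fin N → Fin N → ℝ) (i j : Fin N) : ℝ := w i j / wdeg w i

/-- The one-step random-walk matrix (whose `n`-th power gives `p^{(n)}`). -/
noncomputable def p1m {N : ℕ} (w : Fin N → Fin N → ℝ) : Matrix (Fin N) (Fin N) ℝ :=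
  Matrix.of fun i j => p1 w i j

/-- Connectedness of the weighted graph. -/
def Conn {N : ℕ} (w : Fin N → Fin N → ℝ) : Prop :=
  ∀ i j, Relation.ReflTransGen (fun a b => 0 < w a b) i j

/-- The reproductive values for Birth-death updating: `π_i = w_i⁻¹ / Σ_j w_j⁻¹`. -/
noncomputable def rvBD {N : ℕ} (w : Fin N → Fin N → ℝ) (i : Fin N) : ℝ :=
  (wdeg w i)⁻¹ / ∑ j, (wdeg w j)⁻¹

/-
The reversible measure of the random walk `p¹_ij = w_ij / w_i` on a symmetric weighted graph
is proportional to `w_i`, so the Birth-death transmission matrix `e°_ij = p¹_ij / N` satisfies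
detailed balance with respect to `π_i ∝ w_i⁻¹`; summing detailed balance over `j` gives the
reproductive-value equations. Conversely, if `π` solves those equations, then `f_i := w_i π_i`
is harmonic for the nonnegative weights `w_ij / w_j`, hence constant on the connected graph by
the maximum principle, and the normalisation `Σ π_i = 1` fixes the constant.
-/

theorem sum_mul_eq_sum_mul_of_detailed_balance {ι : Type*} [Fintype ι] (e : ι → ι → ℝ)
    (π : ι → ℝ) (h : ∀ i j, π i * e j i = π j * e i j) (i : ι) :
    ∑ j, e i j * π j = ∑ j, e j i * π i :=
  sum_congr rfl fun j _ => by rw [mul_comm, ← h, mul_comm]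

theorem eq_of_sum_mul_sub_eq_zero {ι : Type*} [Fintype ι] (a : ι → ι → ℝ)
    (ha : ∀ i j, 0 ≤ a i j) (hconn : ∀ i j, Relation.ReflTransGen (fun x y => 0 < a x y) i j)
    (f : ι → ℝ) (hf : ∀ i, ∑ j, a i j * (f i - f j) = 0) (i j : ι) : f i = f j := by
  have : Nonempty ι := ⟨i⟩
  obtain ⟨m, hm⟩ := Finite.exists_max f
  have propagate : ∀ x y, f x = f m → 0 < a x y → f y = f m := by
    intro x y hx hxy
    have hterms : ∀ k ∈ univ, 0 ≤ a x k * (f x - f k) := fun k _ =>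
      mul_nonneg (ha x k) (sub_nonneg.mpr (hx ▸ hm k))
    have hy := (sum_eq_zero_iff_of_nonneg hterms).mp (hf x) y (mem_univ y)
    linarith [(mul_eq_zero.mp hy).resolve_left hxy.ne']
  have hmax : ∀ y, f y = f m := fun y => by
    induction hconn m y with
    | refl => rfl
    | tail _ hxy ih => exact propagate _ _ ih hxy
  rw [hmax i, hmax j]

section BirthDeath

variable {N : ℕ} {w : Fin N → Fin N → ℝ}

theorem rvBD_mul_p1 (hsym : ∀ i j, w i j = w j i) (hdeg : ∀ i, 0 < wdeg w i) (i j : Fin N) :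
    rvBD w i * p1 w j i = rvBD w j * p1 w i j := by
  have hi := (hdeg i).ne'
  have hj := (hdeg j).ne'
  unfold rvBD p1
  rw [hsym j i]
  field_simp

theorem sum_rvBD (hN : 0 < N) (hdeg : ∀ i, 0 < wdeg w i) : ∑ i, rvBD w i = 1 := by
  have : Nonempty (Fin N) := ⟨⟨0, hN⟩⟩
  have hS : 0 < ∑ j, (wdeg w j)⁻¹ := sum_pos (fun j _ => inv_pos.mpr (hdeg j)) univ_nonempty
  unfold rvBD
  rw [← sum_div, div_self hS.ne']

theorem sum_div_wdeg_mul_sub_eq_zero (hN : 0 < N) (hsym : ∀ i j, w i j = w j i)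
    (hdeg : ∀ i, 0 < wdeg w i) (π : Fin N → ℝ)
    (hπ : ∀ i, ∑ j, (p1 w i j / N) * π j = ∑ j, (p1 w j i / N) * π i) (i : Fin N) :
    ∑ j, w i j / wdeg w j * (wdeg w i * π i - wdeg w j * π j) = 0 := by
  have hN' : (N : ℝ) ≠ 0 := Nat.cast_ne_zero.mpr hN.ne'
  have hflux : ∑ j, (p1 w j i * π i - p1 w i j * π j) = 0 := by
    have h := sub_eq_zero.mpr (hπ i).symm
    rw [← sum_sub_distrib] at h
    simpa only [div_mul_eq_mul_div, ← sub_div, ← sum_div, div_eq_zero_iff, hN', or_false] using h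
  calc ∑ j, w i j / wdeg w j * (wdeg w i * π i - wdeg w j * π j)
      = wdeg w i * ∑ j, (p1 w j i * π i - p1 w i j * π j) := by
        rw [mul_sum]
        refine sum_congr rfl fun j _ => ?_
        have hi := (hdeg i).ne'
        have hj := (hdeg j).ne'
        rw [p1, p1, hsym j i]
        field_simp
    _ = 0 := by rw [hflux, mul_zero]

theorem wdeg_mul_eq_of_rv_eq (hN : 0 < N) (hsym : ∀ i j, w i j = w j i)
    (hnn : ∀ i j, 0 ≤ w i j) (hdeg : ∀ i, 0 < wdeg w i) (hconn : Conn w) (π : Fin N → ℝ)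
    (hπ : ∀ i, ∑ j, (p1 w i j / N) * π j = ∑ j, (p1 w j i / N) * π i) (i j : Fin N) :
    wdeg w i * π i = wdeg w j * π j :=
  eq_of_sum_mul_sub_eq_zero (fun i j => w i j / wdeg w j)
    (fun i j => div_nonneg (hnn i j) (hdeg j).le)
    (fun i j => Relation.ReflTransGen.mono (fun _ y h => div_pos h (hdeg y)) _ _ (hconn i j))
    (fun i => wdeg w i * π i) (sum_div_wdeg_mul_sub_eq_zero hN hsym hdeg π hπ) i j

theorem eq_rvBD_of_wdeg_mul_eq (hdeg : ∀ i, 0 < wdeg w i) (π : Fin N → ℝ) (c : ℝ)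
    (hc : ∀ i, wdeg w i * π i = c) (hsum : ∑ i, π i = 1) : π = rvBD w := by
  have hπ : ∀ i, π i = c * (wdeg w i)⁻¹ := fun i => by
    rw [← hc i, mul_comm, inv_mul_cancel_left₀ (hdeg i).ne']
  have hcS : c * ∑ j, (wdeg w j)⁻¹ = 1 := by
    rw [mul_sum, ← hsum]
    exact sum_congr rfl fun j _ => (hπ j).symm
  funext i
  unfold rvBD
  rw [hπ i, eq_inv_of_mul_eq_one_left hcS, div_eq_mul_inv, mul_comm]

end BirthDeath

/-- for the neutral Birth-death process (with `e°_ij = p^{(1)}_{ij}/N`) on a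
connected weighted graph, the reproductive values are `π_i = w_i⁻¹ / Σ_j w_j⁻¹`: they
satisfy the RV equations with `Σ_i π_i = 1`, are the unique such solution, and satisfy
`π_i p^{(1)}_{ji} = π_j p^{(1)}_{ij}`. -/
theorem statement12 {N : ℕ} (hN : 0 < N) (w : Fin N → Fin N → ℝ)
    (hsym : ∀ i j, w i j = w j i) (hnn : ∀ i j, 0 ≤ w i j)
    (hdeg : ∀ i, 0 < wdeg w i) (hconn : Conn w) :
    (∀ i, ∑ j, (p1 w i j / N) * rvBD w j = ∑ j, (p1 w j i / N) * rvBD w i) ∧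
    (∑ i, rvBD w i = 1) ∧
    (∀ π' : Fin N → ℝ,
      (∀ i, ∑ j, (p1 w i j / N) * π' j = ∑ j, (p1 w j i / N) * π' i) →
      (∑ i, π' i = 1) → π' = rvBD w) ∧
    (∀ i j, rvBD w i * p1 w j i = rvBD w j * p1 w i j) := by
  refine ⟨sum_mul_eq_sum_mul_of_detailed_balance _ _ fun i j => ?_, sum_rvBD hN hdeg,
    fun π' hπ hsum => ?_, rvBD_mul_p1 hsym hdeg⟩
  · simp only [← mul_div_assoc, rvBD_mul_p1 hsym hdeg i j]
  · obtain ⟨i₀⟩ : Nonempty (Fin N) := ⟨⟨0, hN⟩⟩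
    exact eq_rvBD_of_wdeg_mul_eq hdeg π' _
      (fun i => wdeg_mul_eq_of_rv_eq hN hsym hnn hdeg hconn π' hπ i i₀) hsum

end Evo
end

section
/- For the donation game on an unweighted regular graph of degree d with death-Birth updating, the sojourn quantities satisfy η^ξ_{(1)} := (1/N) Σ_{i,j} p^{(1)}_{ij} η^ξ_{ij} = (1/2)|ξ|(N − |ξ|), where |ξ| := Σ_i ξ_i, for the unique solution (η^ξ_{ij}) of the system η^ξ_{ij} = (1/2)(|ξ| − N ξ_i ξ_j) + (1/2) Σ_k (p^{(1)}_{ik} η^ξ_{kj} + p^{(1)}_{jk} η^ξ_{ik}) + (δ_{ij}/2)(|ξ| − N ξ_i + 2 Σ_k p^{(1)}_{ik}(η^ξ_{kk} − η^ξ_{ik})) together with Σ_i η^ξ_{ii} = 0 (δ_{ij} the Kronecker delta). -/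
open Finset Filter Asymptotics Topology

namespace Evo

/-!
Sum the defining system over all pairs `(i, j)`. Because the columns of the random-walk matrix
sum to one (the graph is regular and symmetric), the averaging term reproduces `Σ_{i,j} η_{ij}`
and cancels the left-hand side, while by `Σ_i η_{ii} = 0` the diagonal correction contributes
exactly `-Σ_{i,j} p_{ij} η_{ij}`. What remains is `Σ_{i,j} p_{ij} η_{ij} = (N/2)|ξ|(N - |ξ|)`.
-/

lemma sum_sum_mul_eq_sum_of_sum_col_eq_one {ι : Type*} [Fintype ι] {p : ι → ι → ℝ}
    (hcol : ∀ k, ∑ i, p i k = 1) (f : ι → ℝ) : ∑ i, ∑ k, p i k * f k = ∑ k, f k := by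
  rw [sum_comm]
  simp_rw [← sum_mul, hcol, one_mul]

lemma sum_p1_left_eq_one {N : ℕ} {w : Fin N → Fin N → ℝ} {c : ℝ} (hc : c ≠ 0)
    (hsym : ∀ i j, w i j = w j i) (hreg : ∀ i, wdeg w i = c) (k : Fin N) :
    ∑ i, p1 w i k = 1 := by
  simp_rw [p1, hreg, hsym _ k, ← sum_div]
  rw [← wdeg, hreg, div_self hc]

theorem sum_mul_eq_of_sojourn_system {N : ℕ} {p : Fin N → Fin N → ℝ}
    (hcol : ∀ k, ∑ i, p i k = 1) {x : Fin N → ℝ} {η : Fin N → Fin N → ℝ}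
    (hη : ∀ i j, η i j
      = (1 / 2) * ((∑ v, x v) - (N : ℝ) * x i * x j)
        + (1 / 2) * ∑ k, (p i k * η k j + p j k * η i k)
        + (if i = j then
            (1 / 2) * ((∑ v, x v) - (N : ℝ) * x i + 2 * ∑ k, p i k * (η k k - η i k))
          else 0))
    (hnorm : ∑ i, η i i = 0) :
    ∑ i, ∑ j, p i j * η i j = (N / 2) * (∑ v, x v) * (N - ∑ v, x v) := by
  set A := ∑ v, x v
  have htotal : ∑ i, ∑ j, η i j = _ := sum_congr rfl fun i _ =>
    sum_congr rfl fun j _ => hη i j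
  have hleft : ∑ i, ∑ j, ∑ k, p i k * η k j = ∑ i, ∑ j, η i j := by
    rw [← sum_sum_mul_eq_sum_of_sum_col_eq_one hcol fun k => ∑ j, η k j]
    simp_rw [mul_sum]
    exact sum_congr rfl fun i _ => sum_comm
  have hright : ∑ i, ∑ j, ∑ k, p j k * η i k = ∑ i, ∑ j, η i j :=
    sum_congr rfl fun i _ => sum_sum_mul_eq_sum_of_sum_col_eq_one hcol (η i)
  have hdiag : ∑ i, ∑ k, p i k * (η k k - η i k) = -∑ i, ∑ j, p i j * η i j := by
    simp_rw [mul_sub, sum_sub_distrib, sum_sum_mul_eq_sum_of_sum_col_eq_one hcol, hnorm,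
      zero_sub]
  have hsource : ∑ i, ∑ j, (A - N * x i * x j) = N * A * (N - A) := by
    simp only [sum_sub_distrib, ← mul_sum, ← sum_mul, sum_const,
      card_univ, Fintype.card_fin, nsmul_eq_mul]
    ring
  have hdiag_source : ∑ i, (A - N * x i) = 0 := by
    simp only [sum_sub_distrib, ← mul_sum, sum_const,
      card_univ, Fintype.card_fin, nsmul_eq_mul]
    exact sub_self _
  simp only [sum_add_distrib, ← mul_sum, sum_ite_eq, mem_univ,
    if_true, hleft, hright, hdiag, hsource, hdiag_source] at htotal
  linarith

theorem statement16_general {N : ℕ} (d : ℕ) (hd : 0 < d) (w : Fin N → Fin N → ℝ)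
    (hsym : ∀ i j, w i j = w j i) (hreg : ∀ i, wdeg w i = d)
    (ξ : St N)
    (η : Fin N → Fin N → ℝ)
    (hη : ∀ i j, η i j
      = (1 / 2) * ((∑ v, bv (ξ v)) - (N : ℝ) * bv (ξ i) * bv (ξ j))
        + (1 / 2) * ∑ k, (p1 w i k * η k j + p1 w j k * η i k)
        + (if i = j then
            (1 / 2) * ((∑ v, bv (ξ v)) - (N : ℝ) * bv (ξ i)
              + 2 * ∑ k, p1 w i k * (η k k - η i k))
          else 0))
    (hnorm : ∑ i, η i i = 0) :
    (1 / (N : ℝ)) * ∑ i, ∑ j, p1 w i j * η i j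
      = (1 / 2) * (∑ v, bv (ξ v)) * ((N : ℝ) - ∑ v, bv (ξ v)) := by
  rw [sum_mul_eq_of_sojourn_system (sum_p1_left_eq_one (Nat.cast_ne_zero.mpr hd.ne') hsym hreg)
    hη hnorm]
  rcases N.eq_zero_or_pos with rfl | hN
  · simp
  · field_simp

/-- for the donation game on an unweighted connected regular graph of degree
`d` with death-Birth updating, the unique solution of the sojourn system satisfies
`η^ξ_{(1)} = (1/N) Σ_{i,j} p^{(1)}_{ij} η^ξ_{ij} = |ξ|(N − |ξ|)/2`. -/
theorem statement16 {N : ℕ} (d : ℕ) (hd : 0 < d) (w : Fin N → Fin N → ℝ)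
    (h01 : ∀ i j, w i j = 0 ∨ w i j = 1) (hloop : ∀ i, w i i = 0)
    (hsym : ∀ i j, w i j = w j i) (hreg : ∀ i, wdeg w i = d) (hconn : Conn w)
    (ξ : St N)
    (η : Fin N → Fin N → ℝ)
    (hη : ∀ i j, η i j
      = (1 / 2) * ((∑ v, bv (ξ v)) - (N : ℝ) * bv (ξ i) * bv (ξ j))
        + (1 / 2) * ∑ k, (p1 w i k * η k j + p1 w j k * η i k)
        + (if i = j then
            (1 / 2) * ((∑ v, bv (ξ v)) - (N : ℝ) * bv (ξ i)
              + 2 * ∑ k, p1 w i k * (η k k - η i k))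
          else 0))
    (hnorm : ∑ i, η i i = 0) :
    (1 / (N : ℝ)) * ∑ i, ∑ j, p1 w i j * η i j
      = (1 / 2) * (∑ v, bv (ξ v)) * ((N : ℝ) - ∑ v, bv (ξ v)) :=
  statement16_general d hd w hsym hreg ξ η hη hnorm

end Evo
end
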